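/- arXiv:1704.02912 — 9 statements merged into one kernel-verified Lean document; each statement's English description precedes it below -/
import Mathlib

section
/- Let d ∈ {1,2,3}, α ∈ (0, 2/d), c > 0, and let (λ_j)_{j≥1} be a sequence of positive real numbers with λ_j ≥ c j^{2/d} for all j ≥ 1. Then there exists a constant C > 0 such that for every r > 0, ∑_{j=1}^∞ ( r^α / (r^α + λ_j) )² ≤ C r^{α d / 2}. -/
/-!
With `q = 2/d` and `s` defined by `c s^q = r^α`, the lower bound on `λ_j` and
`(s + j)^q ≤ 2^q (s^q + j^q)` give `r^α / (r^α + λ_j) ≤ 2^q (s / (s + j))^q`.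
Since `2q = 4/d > 1` exactly when `d ≤ 3`, comparing `∑_j (s / (s + j))^{2q}` with
`∫_s^∞ (s/x)^{2q} dx = s / (2q - 1)` bounds the series by a multiple of
`s = (r^α / c)^{d/2}`.
-/

open Real

theorem sum_range_add_rpow_neg_le {s p : ℝ} (hs : 0 < s) (hp : 1 < p) (n : ℕ) :
    ∑ i ∈ Finset.range n, (s + ((i : ℝ) + 1)) ^ (-p) ≤ s ^ (1 - p) / (p - 1) := by
  have hanti : AntitoneOn (fun x : ℝ => x ^ (-p)) (Set.Icc s (s + n)) := fun x hx y _ hxy =>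
    rpow_le_rpow_of_nonpos (hs.trans_le hx.1) hxy (by linarith)
  have hint : MeasureTheory.IntegrableOn (fun x : ℝ => x ^ (-p)) (Set.Ioi s) :=
    integrableOn_Ioi_rpow_of_lt (by linarith) hs
  calc ∑ i ∈ Finset.range n, (s + ((i : ℝ) + 1)) ^ (-p)
      ≤ ∫ x in s..s + n, x ^ (-p) := by
        convert hanti.sum_le_integral using 3 with i
        push_cast; ring
    _ ≤ ∫ x in Set.Ioi s, x ^ (-p) := by
        rw [intervalIntegral.integral_of_le (by simp)]
        refine MeasureTheory.setIntegral_mono_set hint ?_ (.of_forall fun x hx => hx.1)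
        filter_upwards [MeasureTheory.ae_restrict_mem measurableSet_Ioi] with x hx
        exact rpow_nonneg (hs.trans hx).le _
    _ = s ^ (1 - p) / (p - 1) := by
        rw [integral_Ioi_rpow_of_lt (by linarith) hs, show -p + 1 = 1 - p by ring,
          neg_div, ← div_neg, neg_sub]

theorem sum_range_div_add_rpow_le {s p : ℝ} (hs : 0 < s) (hp : 1 < p) (n : ℕ) :
    ∑ i ∈ Finset.range n, (s / (s + ((i : ℝ) + 1))) ^ p ≤ s / (p - 1) := by
  calc ∑ i ∈ Finset.range n, (s / (s + ((i : ℝ) + 1))) ^ p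
      = s ^ p * ∑ i ∈ Finset.range n, (s + ((i : ℝ) + 1)) ^ (-p) := by
        rw [Finset.mul_sum]
        refine Finset.sum_congr rfl fun i _ => ?_
        rw [div_rpow hs.le (by positivity), rpow_neg (by positivity), div_eq_mul_inv]
    _ ≤ s ^ p * (s ^ (1 - p) / (p - 1)) := by
        gcongr; exact sum_range_add_rpow_neg_le hs hp n
    _ = s / (p - 1) := by
        rw [mul_div_assoc', ← rpow_add hs, add_sub_cancel, rpow_one]

theorem summable_div_add_rpow {s p : ℝ} (hs : 0 < s) (hp : 1 < p) :
    Summable fun j : ℕ => (s / (s + ((j : ℝ) + 1))) ^ p :=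
  summable_of_sum_range_le (fun _ => by positivity) (sum_range_div_add_rpow_le hs hp)

theorem tsum_div_add_rpow_le {s p : ℝ} (hs : 0 < s) (hp : 1 < p) :
    ∑' j : ℕ, (s / (s + ((j : ℝ) + 1))) ^ p ≤ s / (p - 1) :=
  Real.tsum_le_of_sum_range_le (fun _ => by positivity) (sum_range_div_add_rpow_le hs hp)

theorem add_rpow_le_two_rpow_mul_add_rpow {a b q : ℝ} (ha : 0 ≤ a) (hb : 0 ≤ b) (hq : 0 ≤ q) :
    (a + b) ^ q ≤ 2 ^ q * (a ^ q + b ^ q) :=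
  calc (a + b) ^ q ≤ (2 * max a b) ^ q := by
        gcongr; linarith [le_max_left a b, le_max_right a b]
    _ = 2 ^ q * max (a ^ q) (b ^ q) := by
        rw [mul_rpow zero_le_two (ha.trans (le_max_left a b)), rpow_max ha hb hq]
    _ ≤ 2 ^ q * (a ^ q + b ^ q) := by
        gcongr; exact max_le_add_of_nonneg (by positivity) (by positivity)

theorem div_add_le_two_rpow_mul_div_add_rpow {c s u q l : ℝ} (hc : 0 < c) (hs : 0 < s)
    (hu : 0 ≤ u) (hq : 0 ≤ q) (hl : c * u ^ q ≤ l) :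
    c * s ^ q / (c * s ^ q + l) ≤ 2 ^ q * (s / (s + u)) ^ q := by
  have hsq : 0 < s ^ q := by positivity
  calc c * s ^ q / (c * s ^ q + l) ≤ c * s ^ q / (c * s ^ q + c * u ^ q) := by
        gcongr
    _ = s ^ q / (s ^ q + u ^ q) := by
        rw [← mul_add, mul_div_mul_left _ _ hc.ne']
    _ ≤ s ^ q / ((s + u) ^ q / 2 ^ q) := by
        gcongr
        rw [div_le_iff₀ (by positivity), mul_comm]
        exact add_rpow_le_two_rpow_mul_add_rpow hs.le hu hq
    _ = 2 ^ q * (s / (s + u)) ^ q := by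
        rw [div_rpow hs.le (by positivity)]; field_simp

theorem summable_and_tsum_div_add_sq_le {q c t : ℝ} (hq : 1 / 2 < q) (hc : 0 < c) (ht : 0 < t)
    {lam : ℕ → ℝ} (hlow : ∀ j : ℕ, c * ((j : ℝ) + 1) ^ q ≤ lam j) :
    Summable (fun j : ℕ => (t / (t + lam j)) ^ 2) ∧
      ∑' j : ℕ, (t / (t + lam j)) ^ 2 ≤ 4 ^ q / (2 * q - 1) * (t / c) ^ q⁻¹ := by
  set s := (t / c) ^ q⁻¹
  have hs : 0 < s := by positivity
  have hcs : c * s ^ q = t := by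
    rw [← rpow_mul (by positivity), inv_mul_cancel₀ (by linarith), rpow_one,
      mul_div_cancel₀ _ hc.ne']
  have hbound : ∀ j : ℕ, (t / (t + lam j)) ^ 2 ≤ 4 ^ q * (s / (s + ((j : ℝ) + 1))) ^ (2 * q) := by
    intro j
    have hl : 0 ≤ lam j := le_trans (by positivity) (hlow j)
    have h := div_add_le_two_rpow_mul_div_add_rpow hc hs (by positivity) (by linarith) (hlow j)
    rw [hcs] at h
    calc (t / (t + lam j)) ^ 2 ≤ (2 ^ q * (s / (s + ((j : ℝ) + 1))) ^ q) ^ 2 := by gcongr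
      _ = 4 ^ q * (s / (s + ((j : ℝ) + 1))) ^ (2 * q) := by
        rw [mul_pow, ← rpow_mul_natCast (by positivity), ← rpow_mul_natCast (by positivity),
          show (4 : ℝ) = 2 ^ (2 : ℝ) by norm_num, ← rpow_mul zero_le_two]
        ring_nf
  have hsum := (summable_div_add_rpow hs (by linarith : 1 < 2 * q)).mul_left (4 ^ q)
  have hsum' := Summable.of_nonneg_of_le (fun j => sq_nonneg _) hbound hsum
  refine ⟨hsum', ?_⟩
  calc ∑' j : ℕ, (t / (t + lam j)) ^ 2
      ≤ ∑' j : ℕ, 4 ^ q * (s / (s + ((j : ℝ) + 1))) ^ (2 * q) := hsum'.tsum_le_tsum hbound hsum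
    _ = 4 ^ q * ∑' j : ℕ, (s / (s + ((j : ℝ) + 1))) ^ (2 * q) := tsum_mul_left
    _ ≤ 4 ^ q * (s / (2 * q - 1)) := by gcongr; exact tsum_div_add_rpow_le hs (by linarith)
    _ = 4 ^ q / (2 * q - 1) * s := by ring

theorem stmt0_general (d : ℕ) (hd : d = 1 ∨ d = 2 ∨ d = 3) (α c : ℝ)
    (hc : 0 < c)
    (lam : ℕ → ℝ)
    (hlow : ∀ j : ℕ, c * ((j : ℝ) + 1) ^ ((2 : ℝ) / (d : ℝ)) ≤ lam j) :
    ∃ C : ℝ, 0 < C ∧ ∀ r : ℝ, 0 < r →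
      Summable (fun j : ℕ => (r ^ α / (r ^ α + lam j)) ^ 2) ∧
      ∑' j : ℕ, (r ^ α / (r ^ α + lam j)) ^ 2 ≤ C * r ^ (α * (d : ℝ) / 2) := by
  have hd1 : (1 : ℝ) ≤ d := by rcases hd with rfl | rfl | rfl <;> norm_num
  have hd3 : (d : ℝ) ≤ 3 := by rcases hd with rfl | rfl | rfl <;> norm_num
  have hq : 1 / 2 < (2 : ℝ) / d := by rw [lt_div_iff₀ (by linarith)]; linarith
  have hq' : 0 < 2 * ((2 : ℝ) / d) - 1 := by linarith
  refine ⟨4 ^ ((2 : ℝ) / d) / (2 * (2 / d) - 1) / c ^ ((d : ℝ) / 2), by positivity,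
    fun r hr => ?_⟩
  obtain ⟨hsum, hle⟩ := summable_and_tsum_div_add_sq_le hq hc (rpow_pos_of_pos hr α) hlow
  refine ⟨hsum, hle.trans_eq ?_⟩
  rw [inv_div, div_rpow (by positivity) hc.le, ← rpow_mul hr.le]
  ring_nf

/-- Let `d ∈ {1,2,3}`, `α ∈ (0, 2/d)`, `c > 0`, and let `(λ_j)_{j≥1}`
(here `lam j` is `λ_{j+1}`) be positive reals with `λ_j ≥ c j^{2/d}`. Then there is a
constant `C > 0` such that for every `r > 0`,
`∑_{j≥1} (r^α/(r^α+λ_j))² ≤ C r^{αd/2}`. -/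
theorem stmt0 (d : ℕ) (hd : d = 1 ∨ d = 2 ∨ d = 3) (α c : ℝ)
    (hα0 : 0 < α) (hαd : α < 2 / (d : ℝ)) (hc : 0 < c)
    (lam : ℕ → ℝ) (hpos : ∀ j, 0 < lam j)
    (hlow : ∀ j : ℕ, c * ((j : ℝ) + 1) ^ ((2 : ℝ) / (d : ℝ)) ≤ lam j) :
    ∃ C : ℝ, 0 < C ∧ ∀ r : ℝ, 0 < r →
      Summable (fun j : ℕ => (r ^ α / (r ^ α + lam j)) ^ 2) ∧
      ∑' j : ℕ, (r ^ α / (r ^ α + lam j)) ^ 2 ≤ C * r ^ (α * (d : ℝ) / 2) :=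
  stmt0_general d hd α c hc lam hlow
end

section
/- Let φ ∈ (0, π). For every z ∈ ℂ \ {0} with |arg z| ≤ φ and every real λ > 0, one has |z + λ| ≥ (sin φ / 2)(|z| + λ); consequently |1/(z + λ)| ≤ (2 / sin φ) · 1/(|z| + λ). -/
/-!
Since `|arg z| ≤ φ`, the real part of `z` is at least `‖z‖ cos φ`, so for `λ ≥ 0`
`‖z + λ‖² ≥ ‖z‖² + 2λ‖z‖ cos φ + λ² ≥ cos² (φ/2) (‖z‖ + λ)²`,
and `cos (φ/2) ≥ sin φ / 2` because `sin φ = 2 sin (φ/2) cos (φ/2)`.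
-/

open Real

theorem Complex.norm_add_ofReal_sq (z : ℂ) (a : ℝ) :
    ‖z + a‖ ^ 2 = ‖z‖ ^ 2 + 2 * a * z.re + a ^ 2 := by
  simp only [Complex.sq_norm, Complex.normSq_apply, Complex.add_re, Complex.add_im,
    Complex.ofReal_re, Complex.ofReal_im, add_zero]
  ring

theorem Complex.cos_mul_norm_le_re {z : ℂ} {φ : ℝ} (harg : |z.arg| ≤ φ) (hφ : φ ≤ π) :
    Real.cos φ * ‖z‖ ≤ z.re := by
  have hcos : Real.cos φ ≤ Real.cos z.arg := by
    simpa only [Real.cos_abs] using Real.cos_le_cos_of_nonneg_of_le_pi (abs_nonneg z.arg) hφ harg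
  rw [← Complex.norm_mul_cos_arg, mul_comm]
  exact mul_le_mul_of_nonneg_left hcos (norm_nonneg z)

theorem Complex.cos_half_mul_le_norm_add_ofReal {z : ℂ} {φ a : ℝ} (harg : |z.arg| ≤ φ)
    (hφ : φ ≤ π) (ha : 0 ≤ a) : Real.cos (φ / 2) * (‖z‖ + a) ≤ ‖z + a‖ := by
  have hφ0 : 0 ≤ φ := (abs_nonneg _).trans harg
  have hcos_half : 0 ≤ Real.cos (φ / 2) :=
    Real.cos_nonneg_of_mem_Icc ⟨by linarith, by linarith⟩
  have hre := Complex.cos_mul_norm_le_re harg hφ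
  have hsq : (Real.cos (φ / 2) * (‖z‖ + a)) ^ 2 ≤ ‖z + a‖ ^ 2 := by
    have hcos_sq : Real.cos (φ / 2) ^ 2 = (1 + Real.cos φ) / 2 := by
      rw [Real.cos_sq, mul_div_cancel₀ φ two_ne_zero]; ring
    rw [mul_pow, hcos_sq, Complex.norm_add_ofReal_sq]
    -- `(1 + c)/2 (r + a)² = r² + 2 a r c + a² - (1 - c)/2 (r - a)²`
    nlinarith [mul_le_mul_of_nonneg_left hre (by positivity : (0 : ℝ) ≤ 2 * a),
      mul_nonneg (sq_nonneg (‖z‖ - a)) (sub_nonneg.mpr (Real.cos_le_one φ))]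
  exact (pow_le_pow_iff_left₀ (by positivity) (norm_nonneg _) two_ne_zero).mp hsq

theorem Real.sin_div_two_le_cos_half {φ : ℝ} (h : 0 ≤ cos (φ / 2)) :
    sin φ / 2 ≤ cos (φ / 2) := by
  have hsin : sin φ = 2 * sin (φ / 2) * cos (φ / 2) := by
    rw [← sin_two_mul, mul_div_cancel₀ φ two_ne_zero]
  rw [hsin]
  nlinarith [sin_le_one (φ / 2)]

/-- Let `φ ∈ (0, π)`. For every nonzero `z : ℂ` with `|arg z| ≤ φ`
and every real `λ > 0`, one has `|z + λ| ≥ (sin φ / 2)(|z| + λ)`, and consequently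
`|1/(z+λ)| ≤ (2/sin φ) · 1/(|z|+λ)`. -/
theorem stmt1 (φ : ℝ) (hφ : φ ∈ Set.Ioo 0 π) :
    ∀ z : ℂ, z ≠ 0 → |z.arg| ≤ φ → ∀ lam : ℝ, 0 < lam →
      Real.sin φ / 2 * (‖z‖ + lam) ≤ ‖z + (lam : ℂ)‖ ∧
      ‖1 / (z + (lam : ℂ))‖ ≤ 2 / Real.sin φ * (1 / (‖z‖ + lam)) := by
  intro z _ harg lam hlam
  obtain ⟨hφ0, hφπ⟩ := hφ
  have hsin : 0 < sin φ := sin_pos_of_pos_of_lt_pi hφ0 hφπ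
  have hcos_half : 0 ≤ cos (φ / 2) := cos_nonneg_of_mem_Icc ⟨by linarith, by linarith⟩
  have hlower : sin φ / 2 * (‖z‖ + lam) ≤ ‖z + (lam : ℂ)‖ :=
    calc sin φ / 2 * (‖z‖ + lam)
        ≤ cos (φ / 2) * (‖z‖ + lam) := by
          gcongr
          exact sin_div_two_le_cos_half hcos_half
      _ ≤ ‖z + (lam : ℂ)‖ := Complex.cos_half_mul_le_norm_add_ofReal harg hφπ.le hlam.le
  refine ⟨hlower, ?_⟩
  calc ‖1 / (z + (lam : ℂ))‖ = 1 / ‖z + (lam : ℂ)‖ := by rw [norm_div, norm_one]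
    _ ≤ 1 / (sin φ / 2 * (‖z‖ + lam)) := one_div_le_one_div_of_le (by positivity) hlower
    _ = 2 / sin φ * (1 / (‖z‖ + lam)) := by field_simp
end

section
/- Let φ ∈ (0, π) satisfy cos φ / sin φ ≥ −2/π. Then for all ω ∈ [0, π], the function g(ω) := 1 + ω·(cos φ / sin φ) − cos ω − sin ω·(cos φ / sin φ) satisfies g(ω) ≥ 0. -/
open Real

/-
Write `c = cos φ / sin φ`, so that `g(ω) = (1 - cos ω) + c (ω - sin ω)`. Since `ω - sin ω ≥ 0`,
`g` decreases as `c` does, and it suffices to treat `c = -2/π`, i.e. to show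
`(2/π) (ω - sin ω) ≤ 1 - cos ω` on `[0, π]`. This follows by squeezing `ω²` between the two
quadratic bounds `ω - sin ω ≤ ω²/π` and `cos ω ≤ 1 - 2ω²/π²`.
-/

namespace Real

lemma sub_sq_div_pi_le_sin_of_le_pi_div_two {x : ℝ} (hx₀ : 0 ≤ x) (hx : x ≤ π / 2) :
    x - x ^ 2 / π ≤ sin x := by
  have hcube : x ^ 3 / 6 ≤ x ^ 2 / π := by
    rw [div_le_div_iff₀ (by norm_num) pi_pos]
    have hπx : x * π ≤ 6 := by nlinarith [pi_lt_d2, pi_pos]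
    nlinarith [sq_nonneg x]
  linarith [sin_ge_sub_cube hx₀]

lemma sub_sq_div_pi_le_sin {x : ℝ} (hx₀ : 0 ≤ x) (hx : x ≤ π) : x - x ^ 2 / π ≤ sin x := by
  rcases le_or_gt x (π / 2) with hle | hgt
  · exact sub_sq_div_pi_le_sin_of_le_pi_div_two hx₀ hle
  · have h := sub_sq_div_pi_le_sin_of_le_pi_div_two (x := π - x) (by linarith) (by linarith)
    rw [sin_pi_sub] at h
    have hsymm : π - x - (π - x) ^ 2 / π = x - x ^ 2 / π := by field_simp; ring
    linarith

lemma two_div_pi_mul_sub_sin_le_one_sub_cos {x : ℝ} (hx₀ : 0 ≤ x) (hx : x ≤ π) :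
    2 / π * (x - sin x) ≤ 1 - cos x := by
  have hsin := sub_sq_div_pi_le_sin hx₀ hx
  have hcos := cos_le_one_sub_mul_cos_sq (x := x) (by rwa [abs_of_nonneg hx₀])
  calc 2 / π * (x - sin x) ≤ 2 / π * (x ^ 2 / π) := by gcongr; linarith
    _ = 2 / π ^ 2 * x ^ 2 := by ring
    _ ≤ 1 - cos x := by linarith

end Real

theorem stmt2_general (φ : ℝ)
    (hcot : -2 / π ≤ Real.cos φ / Real.sin φ) :
    ∀ ω ∈ Set.Icc (0 : ℝ) π,
      0 ≤ 1 + ω * (Real.cos φ / Real.sin φ) - Real.cos ω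
          - Real.sin ω * (Real.cos φ / Real.sin φ) := by
  rintro ω ⟨hω₀, hωπ⟩
  have hmono : -2 / π * (ω - sin ω) ≤ cos φ / sin φ * (ω - sin ω) :=
    mul_le_mul_of_nonneg_right hcot (sub_nonneg.2 (sin_le hω₀))
  have hkey := two_div_pi_mul_sub_sin_le_one_sub_cos hω₀ hωπ
  rw [neg_div, neg_mul] at hmono
  linarith

/-- Let `φ ∈ (0, π)` satisfy `cot φ = cos φ / sin φ ≥ −2/π`. Then for
all `ω ∈ [0, π]`, `g(ω) := 1 + ω·cot φ − cos ω − sin ω · cot φ ≥ 0`. -/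
theorem stmt2 (φ : ℝ) (hφ : φ ∈ Set.Ioo 0 π)
    (hcot : -2 / π ≤ Real.cos φ / Real.sin φ) :
    ∀ ω ∈ Set.Icc (0 : ℝ) π,
      0 ≤ 1 + ω * (Real.cos φ / Real.sin φ) - Real.cos ω
          - Real.sin ω * (Real.cos φ / Real.sin φ) :=
  stmt2_general φ hcot
end

section
/- Let s > 0 and φ ∈ (0, π) be such that 0 < s·sin φ < π, and set w = s·e^{iφ} ∈ ℂ. Then Im(1 − e^{−w}) > 0 and Re(1 − e^{−w}) / Im(1 − e^{−w}) ≥ (1 + s·cos φ − cos(s·sin φ)) / sin(s·sin φ). -/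
/-!
Writing `w = a + b i` with `a = s cos φ`, `b = s sin φ`, one has
`1 - e^{-w} = e^{-a} (e^a - cos b + i sin b)`, so the ratio in question is `(e^a - cos b) / sin b`
with `sin b > 0`; the bound is then just `1 + a ≤ e^a`.
-/

open Real

namespace Complex

lemma re_one_sub_exp_neg (w : ℂ) :
    (1 - exp (-w)).re = 1 - Real.exp (-w.re) * Real.cos w.im := by
  simp [exp_re]

lemma im_one_sub_exp_neg (w : ℂ) :
    (1 - exp (-w)).im = Real.exp (-w.re) * Real.sin w.im := by
  simp [exp_im]

lemma re_ofReal_mul_exp_mul_I (s φ : ℝ) : ((s : ℂ) * exp (φ * I)).re = s * Real.cos φ := by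
  simp [exp_ofReal_mul_I_re]

lemma im_ofReal_mul_exp_mul_I (s φ : ℝ) : ((s : ℂ) * exp (φ * I)).im = s * Real.sin φ := by
  simp [exp_ofReal_mul_I_im]

end Complex

lemma one_add_sub_cos_div_sin_le {a b : ℝ} (hb : 0 < sin b) :
    (1 + a - cos b) / sin b ≤ (1 - exp (-a) * cos b) / (exp (-a) * sin b) := by
  have hrhs : (1 - exp (-a) * cos b) / (exp (-a) * sin b) = (exp a - cos b) / sin b := by
    rw [exp_neg]
    field_simp
  rw [hrhs]
  gcongr
  linarith [add_one_le_exp a]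

theorem stmt3_general (s φ : ℝ)
    (h1 : 0 < s * Real.sin φ) (h2 : s * Real.sin φ < π) :
    0 < (1 - Complex.exp (-((s : ℂ) * Complex.exp ((φ : ℂ) * Complex.I)))).im ∧
    (1 + s * Real.cos φ - Real.cos (s * Real.sin φ)) / Real.sin (s * Real.sin φ) ≤
      (1 - Complex.exp (-((s : ℂ) * Complex.exp ((φ : ℂ) * Complex.I)))).re /
        (1 - Complex.exp (-((s : ℂ) * Complex.exp ((φ : ℂ) * Complex.I)))).im := by
  rw [Complex.re_one_sub_exp_neg, Complex.im_one_sub_exp_neg, Complex.re_ofReal_mul_exp_mul_I,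
    Complex.im_ofReal_mul_exp_mul_I]
  have hsin : 0 < Real.sin (s * Real.sin φ) := sin_pos_of_pos_of_lt_pi h1 h2
  exact ⟨mul_pos (exp_pos _) hsin, one_add_sub_cos_div_sin_le hsin⟩

/-- Let `s > 0` and `φ ∈ (0, π)` with `0 < s sin φ < π`, and set
`w = s e^{iφ}`. Then `Im(1 − e^{−w}) > 0` and
`Re(1 − e^{−w}) / Im(1 − e^{−w}) ≥ (1 + s cos φ − cos(s sin φ)) / sin(s sin φ)`. -/
theorem stmt3 (s φ : ℝ) (hs : 0 < s) (hφ : φ ∈ Set.Ioo 0 π)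
    (h1 : 0 < s * Real.sin φ) (h2 : s * Real.sin φ < π) :
    0 < (1 - Complex.exp (-((s : ℂ) * Complex.exp ((φ : ℂ) * Complex.I)))).im ∧
    (1 + s * Real.cos φ - Real.cos (s * Real.sin φ)) / Real.sin (s * Real.sin φ) ≤
      (1 - Complex.exp (-((s : ℂ) * Complex.exp ((φ : ℂ) * Complex.I)))).re /
        (1 - Complex.exp (-((s : ℂ) * Complex.exp ((φ : ℂ) * Complex.I)))).im :=
  stmt3_general s φ h1 h2
end

section
/- Let θ₀ be the unique angle in (π/2, π) with cot θ₀ = −2/π, and let θ ∈ (π/2, θ₀). There exist constants C₀, C₁ > 0, depending only on θ, such that for all τ > 0, all κ ∈ (0, 1/τ], and all z ∈ Γ(θ,κ,τ): C₀|z| ≤ |1 − e^{−τz}|/τ ≤ C₁|z|. -/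
/-!
Put `w = τz`. Every point of `Γ(θ,κ,τ)` gives `Re w ≤ 1`, `|Im w| ≤ π` and `|w| ≤ π / sin θ`,
and on that region `1 - e^{-w}` is comparable to `w`. From above, `|e^{-w} - 1| ≤ |w| e^{|w|}`.
From below, `|1 - e^{-w}|² = (1 - e^{-x})² + 4 e^{-x} sin²(y/2)` for `w = x + iy`, where
`|1 - e^{-x}| ≥ |x| / e` for `x ≤ 1` and Jordan's inequality gives `|sin (y/2)| ≥ |y| / π`
for `|y| ≤ π`.
-/

open Real

/-- The truncated contour `Γ(θ,κ,τ) = {κe^{iψ} : |ψ| ≤ θ} ∪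
{re^{±iθ} : κ ≤ r ≤ π/(τ sin θ)}` in `ℂ`. -/
def GammaContour (θ κ τ : ℝ) : Set ℂ :=
  {z | ∃ ψ : ℝ, |ψ| ≤ θ ∧ z = (κ : ℂ) * Complex.exp ((ψ : ℂ) * Complex.I)} ∪
  {z | ∃ r : ℝ, κ ≤ r ∧ r ≤ π / (τ * Real.sin θ) ∧
      (z = (r : ℂ) * Complex.exp ((θ : ℂ) * Complex.I) ∨
       z = (r : ℂ) * Complex.exp (-(θ : ℂ) * Complex.I))}

theorem Real.abs_le_exp_one_mul_abs_one_sub_exp_neg {x : ℝ} (hx : x ≤ 1) :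
    |x| ≤ exp 1 * |1 - exp (-x)| := by
  rcases le_total x 0 with hx0 | hx0
  · have : -x ≤ exp (-x) - 1 := by linarith [add_one_le_exp (-x)]
    rw [abs_of_nonpos hx0, abs_of_nonpos (by linarith)]
    nlinarith [add_one_le_exp 1]
  · have hfac : 1 - exp (-x) = exp (-x) * (exp x - 1) := by
      rw [mul_sub, ← exp_add]
      simp
    have hexp : exp (-1) ≤ exp (-x) := exp_le_exp.2 (by linarith)
    have hlower : exp (-1) * x ≤ 1 - exp (-x) := by
      rw [hfac]
      gcongr
      linarith [add_one_le_exp x]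
    rw [abs_of_nonneg hx0, abs_of_nonneg (by nlinarith [exp_pos (-1)])]
    calc x = exp 1 * (exp (-1) * x) := by rw [← mul_assoc, ← exp_add]; simp
      _ ≤ exp 1 * (1 - exp (-x)) := by gcongr

theorem Real.abs_le_pi_mul_abs_sin_half {y : ℝ} (hy : |y| ≤ π) : |y| ≤ π * |sin (y / 2)| := by
  have hjordan := mul_abs_le_abs_sin (x := y / 2) (by rw [abs_div, abs_two]; linarith)
  rw [abs_div, abs_two] at hjordan
  calc |y| = π * (2 / π * (|y| / 2)) := by field_simp
    _ ≤ π * |sin (y / 2)| := by gcongr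

theorem Complex.normSq_one_sub_exp_neg (w : ℂ) :
    normSq (1 - exp (-w)) =
      (1 - Real.exp (-w.re)) ^ 2 + 4 * Real.exp (-w.re) * Real.sin (w.im / 2) ^ 2 := by
  have hcos : Real.cos w.im = 1 - 2 * Real.sin (w.im / 2) ^ 2 := by
    have h := Real.cos_two_mul' (w.im / 2)
    rw [mul_div_cancel₀ _ two_ne_zero] at h
    linarith [Real.sin_sq_add_cos_sq (w.im / 2)]
  rw [normSq_apply]
  simp only [sub_re, one_re, exp_re, neg_re, neg_im, sub_im, one_im, exp_im, Real.cos_neg,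
    Real.sin_neg]
  linear_combination
    Real.exp (-w.re) ^ 2 * Real.sin_sq_add_cos_sq w.im - 2 * Real.exp (-w.re) * hcos

theorem Complex.norm_le_exp_one_mul_pi_mul_norm_one_sub_exp_neg {w : ℂ} (hre : w.re ≤ 1)
    (him : |w.im| ≤ π) : ‖w‖ ≤ Real.exp 1 * π * ‖1 - exp (-w)‖ := by
  have hx : w.re ^ 2 ≤ Real.exp 1 ^ 2 * (1 - Real.exp (-w.re)) ^ 2 := by
    simpa only [sq_abs, mul_pow] using
      pow_le_pow_left₀ (abs_nonneg _) (Real.abs_le_exp_one_mul_abs_one_sub_exp_neg hre) 2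
  have hy : w.im ^ 2 ≤ π ^ 2 * Real.sin (w.im / 2) ^ 2 := by
    simpa only [sq_abs, mul_pow] using
      pow_le_pow_left₀ (abs_nonneg _) (Real.abs_le_pi_mul_abs_sin_half him) 2
  have hweight : 1 ≤ 4 * Real.exp 1 ^ 2 * Real.exp (-w.re) := by
    have : Real.exp 1 ≤ Real.exp 1 ^ 2 * Real.exp (-w.re) := by
      rw [sq, mul_assoc, ← Real.exp_add]
      exact le_mul_of_one_le_right (Real.exp_pos 1).le (Real.one_le_exp (by linarith))
    linarith [Real.add_one_le_exp 1]
  have hπ : 1 ≤ π ^ 2 := one_le_pow₀ (by linarith [pi_gt_three])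
  rw [← sq_le_sq₀ (norm_nonneg _) (by positivity), mul_pow, Complex.sq_norm, Complex.sq_norm,
    Complex.normSq_apply, Complex.normSq_one_sub_exp_neg]
  nlinarith [sq_nonneg (1 - Real.exp (-w.re)), sq_nonneg (Real.sin (w.im / 2)),
    mul_nonneg (sq_nonneg π) (sq_nonneg (Real.sin (w.im / 2))), Real.exp_pos 1]

theorem Complex.norm_one_sub_exp_neg_le (w : ℂ) : ‖1 - exp (-w)‖ ≤ ‖w‖ * Real.exp ‖w‖ := by
  simpa [norm_sub_rev] using norm_exp_sub_sum_le_norm_mul_exp (-w) 1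

open Complex in
theorem GammaContour.re_le_and_abs_im_le_and_norm_le {θ κ τ : ℝ} (hθ : π / 2 ≤ θ)
    (hθπ : θ < π) (hτ : 0 < τ) (hκ : 0 ≤ κ) (hκτ : κ ≤ 1 / τ) {z : ℂ}
    (hz : z ∈ GammaContour θ κ τ) :
    (τ * z).re ≤ 1 ∧ |(τ * z).im| ≤ π ∧ ‖(τ : ℂ) * z‖ ≤ π / Real.sin θ := by
  have hsin : 0 < Real.sin θ := Real.sin_pos_of_pos_of_lt_pi (by linarith [pi_pos]) hθπ
  rcases hz with ⟨ψ, -, rfl⟩ | ⟨r, hκr, hrθ, hz⟩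
  · have hnorm : ‖(τ : ℂ) * (κ * exp (ψ * I))‖ ≤ 1 := by
      rw [norm_mul, norm_mul, norm_exp_ofReal_mul_I, mul_one, Complex.norm_of_nonneg hτ.le,
        Complex.norm_of_nonneg hκ, ← le_div_iff₀' hτ]
      exact hκτ
    refine ⟨(re_le_norm _).trans hnorm, (abs_im_le_norm _).trans (hnorm.trans ?_),
      hnorm.trans ?_⟩
    · linarith [pi_gt_three]
    · rw [le_div_iff₀ hsin, one_mul]
      linarith [Real.sin_le_one θ, pi_gt_three]
  · obtain ⟨φ, hcos, hsinφ, rfl⟩ : ∃ φ : ℝ, Real.cos φ = Real.cos θ ∧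
        |Real.sin φ| = Real.sin θ ∧ z = r * exp (φ * I) :=
      hz.elim (fun h ↦ ⟨θ, rfl, abs_of_pos hsin, h⟩) fun h ↦
        ⟨-θ, Real.cos_neg θ, by rw [Real.sin_neg, abs_neg, abs_of_pos hsin],
          by push_cast; exact h⟩
    have hρ : 0 ≤ τ * r := mul_nonneg hτ.le (hκ.trans hκr)
    have hρθ : τ * r * Real.sin θ ≤ π := by
      linarith [(le_div_iff₀ (mul_pos hτ hsin)).1 hrθ]
    rw [← mul_assoc, ← ofReal_mul, re_ofReal_mul, im_ofReal_mul, exp_ofReal_mul_I_re,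
      exp_ofReal_mul_I_im, norm_mul, norm_exp_ofReal_mul_I, mul_one, Complex.norm_of_nonneg hρ,
      abs_mul, abs_of_nonneg hρ, hcos, hsinφ, le_div_iff₀ hsin]
    refine ⟨?_, hρθ, hρθ⟩
    nlinarith [Real.cos_nonpos_of_pi_div_two_le_of_le hθ (by linarith)]

theorem stmt5_general (θ₀ θ : ℝ) (hθ₀ : θ₀ ∈ Set.Ioo (π / 2) π)
    (hθ : θ ∈ Set.Ioo (π / 2) θ₀) :
    ∃ C₀ : ℝ, 0 < C₀ ∧ ∃ C₁ : ℝ, 0 < C₁ ∧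
      ∀ τ : ℝ, 0 < τ → ∀ κ : ℝ, 0 < κ → κ ≤ 1 / τ → ∀ z ∈ GammaContour θ κ τ,
        C₀ * ‖z‖ ≤ ‖1 - Complex.exp (-((τ : ℂ) * z))‖ / τ ∧
        ‖1 - Complex.exp (-((τ : ℂ) * z))‖ / τ ≤ C₁ * ‖z‖ := by
  refine ⟨1 / (exp 1 * π), by positivity, exp (π / Real.sin θ), exp_pos _, ?_⟩
  intro τ hτ κ hκ hκτ z hz
  obtain ⟨hre, him, hnorm⟩ := GammaContour.re_le_and_abs_im_le_and_norm_le hθ.1.le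
    (hθ.2.trans hθ₀.2) hτ hκ.le hκτ hz
  have hτz : ‖(τ : ℂ) * z‖ = τ * ‖z‖ := by rw [norm_mul, Complex.norm_of_nonneg hτ.le]
  have hlower := Complex.norm_le_exp_one_mul_pi_mul_norm_one_sub_exp_neg hre him
  have hupper : ‖1 - Complex.exp (-((τ : ℂ) * z))‖ ≤ τ * ‖z‖ * exp (π / Real.sin θ) := by
    rw [← hτz]
    exact (Complex.norm_one_sub_exp_neg_le _).trans (by gcongr)
  rw [hτz] at hlower
  constructor
  · rw [le_div_iff₀ hτ]
    calc 1 / (exp 1 * π) * ‖z‖ * τ = τ * ‖z‖ / (exp 1 * π) := by ring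
      _ ≤ ‖1 - Complex.exp (-((τ : ℂ) * z))‖ := by
        rw [div_le_iff₀ (by positivity)]
        linarith
  · rw [div_le_iff₀ hτ]
    linarith

/-- Let `θ₀ ∈ (π/2, π)` with `cot θ₀ = −2/π` and `θ ∈ (π/2, θ₀)`.
There exist `C₀, C₁ > 0` depending only on `θ` such that for all `τ > 0`,
`κ ∈ (0, 1/τ]` and `z ∈ Γ(θ,κ,τ)`: `C₀|z| ≤ |1 − e^{−τz}|/τ ≤ C₁|z|`. -/
theorem stmt5 (θ₀ θ : ℝ) (hθ₀ : θ₀ ∈ Set.Ioo (π / 2) π)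
    (hcot : Real.cos θ₀ / Real.sin θ₀ = -2 / π)
    (hθ : θ ∈ Set.Ioo (π / 2) θ₀) :
    ∃ C₀ : ℝ, 0 < C₀ ∧ ∃ C₁ : ℝ, 0 < C₁ ∧
      ∀ τ : ℝ, 0 < τ → ∀ κ : ℝ, 0 < κ → κ ≤ 1 / τ → ∀ z ∈ GammaContour θ κ τ,
        C₀ * ‖z‖ ≤ ‖1 - Complex.exp (-((τ : ℂ) * z))‖ / τ ∧
        ‖1 - Complex.exp (-((τ : ℂ) * z))‖ / τ ≤ C₁ * ‖z‖ :=
  stmt5_general θ₀ θ hθ₀ hθ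
end

section
/- Let θ₀ be the unique angle in (π/2, π) with cot θ₀ = −2/π, let θ ∈ (π/2, θ₀), and let α ∈ (0, 2). There exists a constant C > 0, depending only on θ and α, such that for all τ > 0, all κ ∈ (0, 1/τ], and all z ∈ Γ(θ,κ,τ): |((1 − e^{−τz})/τ)^α − z^α| ≤ C τ |z|^{α+1}, where complex powers are taken in the principal branch. -/
/-!
Write `ζ = τz`. If `‖ζ‖ ≤ 1/3`, then `(1 - e^{-ζ})/τ = z f` with `f = (1 - e^{-ζ})/ζ = 1 + O(ζ)`.
As `f` lies within `1/3` of `1`, `|arg f| ≤ π/6`; the condition `cot θ₀ = -2/π` gives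
`θ < θ₀ < 5π/6`, so `arg z + arg f` stays in `(-π, π]` and the principal power splits as
`(z f)^α = z^α f^α`, where `f^α - 1 = O(ζ)` by the mean value inequality. If
`1/3 < ‖ζ‖ ≤ π / sin θ` (the contour is truncated at this radius), both powers are
`O(‖z‖^α) = O(τ ‖z‖^(α+1))`.
-/

open Real

open Set

theorem Complex.mul_cpow_of_arg_add_mem {x y : ℂ} (hx : x ≠ 0) (hy : y ≠ 0)
    (h : x.arg + y.arg ∈ Ioc (-π) π) (w : ℂ) : (x * y) ^ w = x ^ w * y ^ w := by
  simp only [Complex.cpow_def_of_ne_zero hx, Complex.cpow_def_of_ne_zero hy,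
    Complex.cpow_def_of_ne_zero (mul_ne_zero hx hy), Complex.log_mul hx hy h, add_mul,
    Complex.exp_add]

theorem Complex.norm_ofReal_mul_exp_mul_I {r : ℝ} (hr : 0 ≤ r) (ψ : ℝ) :
    ‖(r : ℂ) * Complex.exp (ψ * Complex.I)‖ = r := by
  rw [norm_mul, Complex.norm_exp_ofReal_mul_I, Complex.norm_real, Real.norm_of_nonneg hr,
    mul_one]

theorem Complex.arg_ofReal_mul_exp_mul_I {r ψ : ℝ} (hr : 0 < r) (hψ : ψ ∈ Ioc (-π) π) :
    Complex.arg (r * Complex.exp (ψ * Complex.I)) = ψ := by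
  rw [Complex.exp_mul_I, Complex.arg_mul_cos_add_sin_mul_I hr hψ]

section NearOne

variable {w : ℂ} {r : ℝ}

theorem one_sub_le_re_of_norm_sub_one_le (h : ‖w - 1‖ ≤ r) : 1 - r ≤ w.re := by
  have := (abs_le.1 ((Complex.abs_re_le_norm (w - 1)).trans h)).1
  simp only [Complex.sub_re, Complex.one_re] at this
  linarith

theorem one_sub_le_norm_of_norm_sub_one_le (h : ‖w - 1‖ ≤ r) : 1 - r ≤ ‖w‖ := by
  have := abs_norm_sub_norm_le w 1
  rw [norm_one] at this
  linarith [(abs_le.1 this).1]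

theorem norm_le_one_add_of_norm_sub_one_le (h : ‖w - 1‖ ≤ r) : ‖w‖ ≤ 1 + r := by
  have := abs_norm_sub_norm_le w 1
  rw [norm_one] at this
  linarith [(abs_le.1 this).2]

theorem abs_arg_le_pi_div_six_of_norm_sub_one_le (h : ‖w - 1‖ ≤ 1 / 3) :
    |w.arg| ≤ π / 6 := by
  have hnorm := one_sub_le_norm_of_norm_sub_one_le h
  have him : |w.im| ≤ 1 / 3 := by
    simpa using (Complex.abs_im_le_norm (w - 1)).trans h
  have hsin : |w.im / ‖w‖| ≤ 1 / 2 := by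
    rw [abs_div, abs_norm, div_le_iff₀ (by linarith)]
    linarith
  obtain ⟨hlo, hhi⟩ := abs_le.1 hsin
  rw [Complex.arg_of_re_nonneg (by linarith [one_sub_le_re_of_norm_sub_one_le h]), abs_le]
  have hpi := pi_pos
  constructor
  · rw [le_arcsin_iff_sin_le ⟨by linarith, by linarith⟩ ⟨by linarith, by linarith⟩, sin_neg,
      sin_pi_div_six]
    linarith
  · rw [arcsin_le_iff_le_sin ⟨by linarith, by linarith⟩ ⟨by linarith, by linarith⟩,
      sin_pi_div_six]
    exact hhi

theorem norm_cpow_sub_one_le {α : ℝ} (hα : α ∈ Icc (0 : ℝ) 2) (h : ‖w - 1‖ ≤ 1 / 3) :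
    ‖w ^ (α : ℂ) - 1‖ ≤ 6 * ‖w - 1‖ := by
  set s := Metric.closedBall (1 : ℂ) (1 / 3)
  have hmem : ∀ x ∈ s, ‖x - 1‖ ≤ 1 / 3 := fun x hx => by
    rwa [Metric.mem_closedBall, Complex.dist_eq] at hx
  have hderiv : ∀ x ∈ s, HasDerivWithinAt (fun x : ℂ => x ^ (α : ℂ))
      (α * x ^ ((α : ℂ) - 1)) s x := fun x hx =>
    (Complex.hasStrictDerivAt_cpow_const
      (Or.inl (by linarith [one_sub_le_re_of_norm_sub_one_le (hmem x hx)]))).hasDerivAt.hasDerivWithinAt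
  have hbound : ∀ x ∈ s, ‖(α : ℂ) * x ^ ((α : ℂ) - 1)‖ ≤ 6 := by
    intro x hx
    have hlo := one_sub_le_norm_of_norm_sub_one_le (hmem x hx)
    have hhi := norm_le_one_add_of_norm_sub_one_le (hmem x hx)
    have hpos : 0 < ‖x‖ := by linarith
    have hxα : ‖x‖ ^ α ≤ 16 / 9 := calc
      ‖x‖ ^ α ≤ (4 / 3) ^ α := rpow_le_rpow hpos.le (by linarith) hα.1
      _ ≤ (4 / 3) ^ (2 : ℝ) := rpow_le_rpow_of_exponent_le (by norm_num) hα.2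
      _ = 16 / 9 := by rw [rpow_two]; norm_num
    rw [norm_mul, Complex.norm_real, norm_of_nonneg hα.1, ← Complex.ofReal_one,
      ← Complex.ofReal_sub, Complex.norm_cpow_real, rpow_sub_one hpos.ne',
      mul_div_assoc', div_le_iff₀ hpos]
    nlinarith [hα.2, rpow_nonneg hpos.le α]
  simpa [Complex.one_cpow] using
    (convex_closedBall (1 : ℂ) (1 / 3)).norm_image_sub_le_of_norm_hasDerivWithin_le hderiv
      hbound (Metric.mem_closedBall_self (by norm_num)) (by simpa [s, Complex.dist_eq] using h)

end NearOne

theorem lt_five_pi_div_six_of_cot_eq {θ : ℝ} (hθ : θ ∈ Ioo 0 π)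
    (hcot : Real.cos θ / Real.sin θ = -2 / π) : θ < 5 * π / 6 := by
  have hpi := pi_pos
  have hsin : 0 < Real.sin θ := sin_pos_of_pos_of_lt_pi hθ.1 hθ.2
  have hcos : Real.cos θ = -(2 / π * Real.sin θ) := by
    rw [← neg_mul, ← neg_div, ← hcot, div_mul_cancel₀ _ hsin.ne']
  -- `cos θ ≥ -2/π > -√3/2 = cos (5π/6)`
  have hsqrt3 : 3 / 2 < √3 := by
    rw [lt_sqrt (by norm_num)]; norm_num
  have hcos_gt : Real.cos (5 * π / 6) < Real.cos θ := by
    rw [show 5 * π / 6 = π - π / 6 by ring, cos_pi_sub, cos_pi_div_six, hcos]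
    have : 2 / π * Real.sin θ ≤ 2 / π :=
      mul_le_of_le_one_right (by positivity) (sin_le_one θ)
    have : 2 / π < √3 / 2 := by
      rw [div_lt_div_iff₀ hpi two_pos]; nlinarith [pi_gt_three]
    linarith
  by_contra! h
  exact hcos_gt.not_ge (cos_le_cos_of_nonneg_of_le_pi (by linarith) hθ.2.le h)

theorem ne_zero_and_abs_arg_le_and_mul_norm_le_of_mem_GammaContour {θ κ τ : ℝ}
    (hθ : θ ∈ Ioo 0 π) (hτ : 0 < τ) (hκ : 0 < κ) (hκτ : κ ≤ 1 / τ) {z : ℂ}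
    (hz : z ∈ GammaContour θ κ τ) :
    z ≠ 0 ∧ |z.arg| ≤ θ ∧ τ * ‖z‖ ≤ π / Real.sin θ := by
  have hsin : 0 < Real.sin θ := sin_pos_of_pos_of_lt_pi hθ.1 hθ.2
  obtain ⟨r, ψ, hr, hrB, hψ, rfl⟩ : ∃ r ψ : ℝ, 0 < r ∧ τ * r ≤ π / Real.sin θ ∧ |ψ| ≤ θ ∧
      z = r * Complex.exp (ψ * Complex.I) := by
    rcases hz with ⟨ψ, hψ, rfl⟩ | ⟨r, hκr, hrB, rfl | rfl⟩
    · refine ⟨κ, ψ, hκ, ?_, hψ, rfl⟩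
      calc τ * κ ≤ 1 := by rwa [le_div_iff₀ hτ, mul_comm] at hκτ
        _ ≤ π / Real.sin θ := by
          rw [le_div_iff₀ hsin]; linarith [sin_le_one θ, pi_gt_three]
    all_goals
      have hτr : τ * r ≤ π / Real.sin θ := by rwa [← le_div_iff₀' hτ, div_div, mul_comm]
    · exact ⟨r, θ, hκ.trans_le hκr, hτr, (abs_of_pos hθ.1).le, rfl⟩
    · exact ⟨r, -θ, hκ.trans_le hκr, hτr, (abs_neg θ ▸ abs_of_pos hθ.1).le, by push_cast; rfl⟩
  obtain ⟨hψlo, hψhi⟩ := abs_le.1 hψ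
  rw [Complex.norm_ofReal_mul_exp_mul_I hr.le,
    Complex.arg_ofReal_mul_exp_mul_I hr ⟨by linarith [hθ.2], by linarith [hθ.2]⟩]
  exact ⟨mul_ne_zero (by exact_mod_cast hr.ne') (Complex.exp_ne_zero _), hψ, hrB⟩

/-- The backward Euler convolution quadrature symbol `δ(e^{-τz})/τ`, with `δ(ζ) = 1 - ζ`. -/
noncomputable def backwardEulerSymbol (τ : ℝ) (z : ℂ) : ℂ := (1 - Complex.exp (-(τ * z))) / τ

theorem norm_one_sub_exp_neg_div_sub_one_le {ζ : ℂ} (hζ : ζ ≠ 0) (h : ‖ζ‖ ≤ 1) :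
    ‖(1 - Complex.exp (-ζ)) / ζ - 1‖ ≤ ‖ζ‖ := by
  have hpos : 0 < ‖ζ‖ := norm_pos_iff.2 hζ
  have hrem := Complex.norm_exp_sub_one_sub_id_le (x := -ζ) (by rwa [norm_neg])
  rw [norm_neg] at hrem
  have heq : (1 - Complex.exp (-ζ)) / ζ - 1 = -(Complex.exp (-ζ) - 1 - -ζ) / ζ := by
    field_simp; ring
  rw [heq, norm_div, norm_neg, div_le_iff₀ hpos]
  nlinarith

section BackwardEulerSymbol

variable {α τ : ℝ} {z : ℂ}

theorem backwardEulerSymbol_eq_mul (hτ : τ ≠ 0) (hz : z ≠ 0) :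
    backwardEulerSymbol τ z = z * ((1 - Complex.exp (-(τ * z))) / (τ * z)) := by
  have : (τ : ℂ) ≠ 0 := by exact_mod_cast hτ
  unfold backwardEulerSymbol
  field_simp

theorem norm_backwardEulerSymbol_le (hτ : 0 < τ) :
    ‖backwardEulerSymbol τ z‖ ≤ (1 + Real.exp (τ * ‖z‖)) / τ := by
  have hexp : ‖Complex.exp (-(τ * z))‖ ≤ Real.exp (τ * ‖z‖) := by
    rw [Complex.norm_exp, Real.exp_le_exp]
    calc (-(τ * z)).re ≤ ‖-(τ * z : ℂ)‖ := Complex.re_le_norm _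
      _ = τ * ‖z‖ := by rw [norm_neg, norm_mul, Complex.norm_real, norm_of_nonneg hτ.le]
  rw [backwardEulerSymbol, norm_div, Complex.norm_real, norm_of_nonneg hτ.le]
  gcongr
  exact (norm_sub_le _ _).trans (by rw [norm_one]; gcongr)

theorem norm_backwardEulerSymbol_cpow_sub_cpow_le_of_small (hα : α ∈ Icc (0 : ℝ) 2)
    (hτ : 0 < τ) (hz : z ≠ 0) (harg : |z.arg| < 5 * π / 6) (hsmall : τ * ‖z‖ ≤ 1 / 3) :
    ‖backwardEulerSymbol τ z ^ (α : ℂ) - z ^ (α : ℂ)‖ ≤ 6 * τ * ‖z‖ ^ (α + 1) := by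
  set f := (1 - Complex.exp (-(τ * z))) / (τ * z)
  have hτz : ‖(τ * z : ℂ)‖ = τ * ‖z‖ := by rw [norm_mul, Complex.norm_real, norm_of_nonneg hτ.le]
  have hf : ‖f - 1‖ ≤ τ * ‖z‖ := hτz ▸ norm_one_sub_exp_neg_div_sub_one_le
    (mul_ne_zero (by exact_mod_cast hτ.ne') hz) (by rw [hτz]; linarith)
  have hf' : ‖f - 1‖ ≤ 1 / 3 := hf.trans hsmall
  have hf0 : f ≠ 0 := by
    rintro hf0
    have := one_sub_le_norm_of_norm_sub_one_le hf'
    rw [hf0, norm_zero] at this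
    linarith
  -- `|arg f| ≤ π/6`, so `arg z + arg f` stays in `(-π, π]` and the power splits
  have hsplit : (z * f) ^ (α : ℂ) = z ^ (α : ℂ) * f ^ (α : ℂ) := by
    have := abs_le.1 (abs_arg_le_pi_div_six_of_norm_sub_one_le hf')
    have := abs_lt.1 harg
    exact Complex.mul_cpow_of_arg_add_mem hz hf0 ⟨by linarith [pi_pos], by linarith⟩ _
  rw [backwardEulerSymbol_eq_mul hτ.ne' hz, hsplit, ← mul_sub_one, norm_mul,
    Complex.norm_cpow_real, rpow_add_one (norm_pos_iff.2 hz).ne']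
  calc ‖z‖ ^ α * ‖f ^ (α : ℂ) - 1‖ ≤ ‖z‖ ^ α * (6 * (τ * ‖z‖)) := by
        gcongr
        exact (norm_cpow_sub_one_le hα hf').trans (by gcongr)
    _ = 6 * τ * (‖z‖ ^ α * ‖z‖) := by ring

theorem norm_backwardEulerSymbol_cpow_sub_cpow_le_of_large {B : ℝ} (hα : 0 ≤ α) (hτ : 0 < τ)
    (hlarge : 1 / 3 ≤ τ * ‖z‖) (hB : τ * ‖z‖ ≤ B) :
    ‖backwardEulerSymbol τ z ^ (α : ℂ) - z ^ (α : ℂ)‖ ≤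
      3 * (1 + (3 * (1 + Real.exp B)) ^ α) * τ * ‖z‖ ^ (α + 1) := by
  have hz : 0 < ‖z‖ := pos_of_mul_pos_right (by linarith) hτ.le
  have hinv : 1 / τ ≤ 3 * ‖z‖ := by rw [div_le_iff₀ hτ]; linarith
  have hsymb : ‖backwardEulerSymbol τ z‖ ≤ 3 * (1 + Real.exp B) * ‖z‖ := calc
    _ ≤ (1 + Real.exp (τ * ‖z‖)) / τ := norm_backwardEulerSymbol_le hτ
    _ ≤ (1 + Real.exp B) * (1 / τ) := by rw [mul_one_div]; gcongr
    _ ≤ (1 + Real.exp B) * (3 * ‖z‖) := by gcongr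
    _ = 3 * (1 + Real.exp B) * ‖z‖ := by ring
  have hzα : ‖z‖ ^ α ≤ 3 * τ * ‖z‖ ^ (α + 1) := by
    rw [rpow_add_one hz.ne']
    nlinarith [rpow_nonneg hz.le α]
  calc _ ≤ ‖backwardEulerSymbol τ z ^ (α : ℂ)‖ + ‖z ^ (α : ℂ)‖ := norm_sub_le _ _
    _ ≤ (3 * (1 + Real.exp B)) ^ α * ‖z‖ ^ α + ‖z‖ ^ α := by
        rw [Complex.norm_cpow_real, Complex.norm_cpow_real, ← mul_rpow (by positivity) hz.le]
        gcongr
    _ = (1 + (3 * (1 + Real.exp B)) ^ α) * ‖z‖ ^ α := by ring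
    _ ≤ (1 + (3 * (1 + Real.exp B)) ^ α) * (3 * τ * ‖z‖ ^ (α + 1)) := by gcongr
    _ = _ := by ring

end BackwardEulerSymbol

/-- Let `θ₀ ∈ (π/2, π)` with `cot θ₀ = −2/π`, `θ ∈ (π/2, θ₀)` and
`α ∈ (0, 2)`. There exists `C > 0` depending only on `θ` and `α` such that for all
`τ > 0`, `κ ∈ (0, 1/τ]` and `z ∈ Γ(θ,κ,τ)`:
`|((1 − e^{−τz})/τ)^α − z^α| ≤ C τ |z|^{α+1}`, with principal-branch powers. -/
theorem stmt7 (θ₀ θ α : ℝ) (hθ₀ : θ₀ ∈ Set.Ioo (π / 2) π)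
    (hcot : Real.cos θ₀ / Real.sin θ₀ = -2 / π)
    (hθ : θ ∈ Set.Ioo (π / 2) θ₀) (hα : α ∈ Set.Ioo (0 : ℝ) 2) :
    ∃ C : ℝ, 0 < C ∧
      ∀ τ : ℝ, 0 < τ → ∀ κ : ℝ, 0 < κ → κ ≤ 1 / τ → ∀ z ∈ GammaContour θ κ τ,
        ‖((1 - Complex.exp (-((τ : ℂ) * z))) / (τ : ℂ)) ^ (α : ℂ)
            - z ^ (α : ℂ)‖ ≤
          C * τ * ‖z‖ ^ (α + 1) := by
  have hpi := pi_pos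
  have hθπ : θ < π := hθ.2.trans hθ₀.2
  have hθ56 : θ < 5 * π / 6 :=
    hθ.2.trans (lt_five_pi_div_six_of_cot_eq ⟨by linarith [hθ₀.1], hθ₀.2⟩ hcot)
  set K := 3 * (1 + (3 * (1 + Real.exp (π / Real.sin θ))) ^ α)
  refine ⟨6 + K, by positivity, fun τ hτ κ hκ hκτ z hz => ?_⟩
  obtain ⟨hz0, harg, hzB⟩ :=
    ne_zero_and_abs_arg_le_and_mul_norm_le_of_mem_GammaContour ⟨by linarith [hθ.1], hθπ⟩
      hτ hκ hκτ hz
  have hrhs : 0 ≤ τ * ‖z‖ ^ (α + 1) := by positivity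
  rcases le_or_gt (τ * ‖z‖) (1 / 3) with hsmall | hlarge
  · calc _ ≤ 6 * τ * ‖z‖ ^ (α + 1) :=
          norm_backwardEulerSymbol_cpow_sub_cpow_le_of_small (Ioo_subset_Icc_self hα) hτ hz0
            (harg.trans_lt hθ56) hsmall
      _ ≤ (6 + K) * τ * ‖z‖ ^ (α + 1) := by
          simp only [mul_assoc]; gcongr; exact le_add_of_nonneg_right (by positivity)
  · calc _ ≤ K * τ * ‖z‖ ^ (α + 1) :=
          norm_backwardEulerSymbol_cpow_sub_cpow_le_of_large hα.1.le hτ hlarge.le hzB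
      _ ≤ (6 + K) * τ * ‖z‖ ^ (α + 1) := by
          simp only [mul_assoc]; gcongr; exact le_add_of_nonneg_left (by norm_num)
end

section
/- Let θ₀ be the unique angle in (π/2, π) with cot θ₀ = −2/π, and let θ ∈ (π/2, θ₀). There exists a constant C > 0, depending only on θ, such that for all τ > 0, all κ ∈ (0, 1/τ], and all z ∈ Γ(θ,κ,τ): e^{zτ} − 1 ≠ 0, |zτ/(e^{zτ} − 1)| ≤ C, and |e^{zτ} − 1 − zτ| ≤ C τ |z| · |e^{zτ} − 1|. -/
open Real

/-
On `Γ(θ,κ,τ)` the point `w = zτ` either lies in the closed unit disc (the arc, since `κτ ≤ 1`,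
and the start of the rays) or lies on a ray with `1 ≤ |w| ≤ π / sin θ` and
`Re w = |w| cos θ ≤ cos θ < 0`. In both regions `|e^w − 1| ≥ c |w|` for some `c > 0` depending
only on `θ`: near `0` because `e^w − 1 = w + O(|w|²)`, and on the rays because
`|e^w| ≤ e^{cos θ} < 1` while `|w|` is bounded. Both claimed estimates follow from this lower bound.
-/

lemma norm_exp_sub_one_sub_self_le {w : ℂ} (hw : ‖w‖ ≤ 1) :
    ‖Complex.exp w - 1 - w‖ ≤ 3 / 4 * ‖w‖ ^ 2 := by
  have h := Complex.exp_bound hw two_pos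
  have hsum : ∑ m ∈ Finset.range 2, w ^ m / m.factorial = 1 + w := by
    simp [Finset.sum_range_succ]
  rw [hsum, ← sub_sub] at h
  norm_num at h
  linarith

lemma norm_div_four_le_norm_exp_sub_one {w : ℂ} (hw : ‖w‖ ≤ 1) :
    ‖w‖ / 4 ≤ ‖Complex.exp w - 1‖ := by
  have hsq : ‖w‖ ^ 2 ≤ ‖w‖ := by nlinarith [norm_nonneg w]
  have htri : ‖w‖ - ‖Complex.exp w - 1 - w‖ ≤ ‖Complex.exp w - 1‖ := by
    simpa [norm_sub_rev w] using norm_sub_norm_le w (w - (Complex.exp w - 1))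
  linarith [norm_exp_sub_one_sub_self_le hw]

lemma one_sub_exp_re_le_norm_exp_sub_one (w : ℂ) :
    1 - Real.exp w.re ≤ ‖Complex.exp w - 1‖ := by
  simpa [Complex.norm_exp, norm_sub_rev] using norm_sub_norm_le (1 : ℂ) (Complex.exp w)

lemma mul_norm_le_norm_exp_sub_one {a R : ℝ} (ha : a ≤ 0) (hR : 0 < R) {w : ℂ}
    (hw : ‖w‖ ≤ 1 ∨ (w.re ≤ a ∧ ‖w‖ ≤ R)) :
    min (1 / 4) ((1 - Real.exp a) / R) * ‖w‖ ≤ ‖Complex.exp w - 1‖ := by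
  rcases hw with hw | ⟨hre, hwR⟩
  · calc min (1 / 4) ((1 - Real.exp a) / R) * ‖w‖ ≤ 1 / 4 * ‖w‖ := by
          gcongr; exact min_le_left _ _
      _ = ‖w‖ / 4 := by ring
      _ ≤ ‖Complex.exp w - 1‖ := norm_div_four_le_norm_exp_sub_one hw
  · have hk : 0 ≤ (1 - Real.exp a) / R :=
      div_nonneg (by linarith [Real.exp_le_one_iff.2 ha]) hR.le
    calc min (1 / 4) ((1 - Real.exp a) / R) * ‖w‖ ≤ (1 - Real.exp a) / R * R :=
          mul_le_mul (min_le_right _ _) hwR (norm_nonneg _) hk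
      _ = 1 - Real.exp a := div_mul_cancel₀ _ hR.ne'
      _ ≤ 1 - Real.exp w.re := by gcongr
      _ ≤ ‖Complex.exp w - 1‖ := one_sub_exp_re_le_norm_exp_sub_one w

lemma norm_div_exp_sub_one_le {c : ℝ} (hc : 0 < c) {w : ℂ}
    (hw : c * ‖w‖ ≤ ‖Complex.exp w - 1‖) :
    ‖w / (Complex.exp w - 1)‖ ≤ 1 / c := by
  rw [norm_div]
  refine div_le_of_le_mul₀ (norm_nonneg _) (by positivity) ?_
  rw [div_mul_eq_mul_div, one_mul, le_div_iff₀ hc, mul_comm]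
  exact hw

lemma norm_exp_sub_one_sub_self_le_mul {c : ℝ} (hc0 : 0 < c) (hc1 : c ≤ 1) {w : ℂ}
    (hw : c * ‖w‖ ≤ ‖Complex.exp w - 1‖) :
    ‖Complex.exp w - 1 - w‖ ≤ 2 / c * ‖w‖ * ‖Complex.exp w - 1‖ := by
  set A := ‖Complex.exp w - 1‖
  have hA : 0 ≤ A := norm_nonneg _
  rw [div_mul_eq_mul_div, div_mul_eq_mul_div, le_div_iff₀ hc0]
  rcases le_or_gt ‖w‖ 1 with hw1 | hw1
  · nlinarith [norm_exp_sub_one_sub_self_le hw1, norm_nonneg w]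
  · have htri : ‖Complex.exp w - 1 - w‖ ≤ A + ‖w‖ := norm_sub_le _ _
    nlinarith

lemma norm_eq_or_re_eq_of_mem_gammaContour {θ κ τ : ℝ} (hκ : 0 ≤ κ) {z : ℂ}
    (hz : z ∈ GammaContour θ κ τ) :
    ‖z‖ = κ ∨ (κ ≤ ‖z‖ ∧ ‖z‖ ≤ π / (τ * Real.sin θ) ∧ z.re = ‖z‖ * Real.cos θ) := by
  rcases hz with ⟨ψ, -, rfl⟩ | ⟨r, hκr, hr, rfl | rfl⟩
  · left
    simp [Complex.norm_exp_ofReal_mul_I, abs_of_nonneg hκ]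
  all_goals
    right
    simp [← Complex.ofReal_neg, Complex.norm_exp_ofReal_mul_I, Complex.exp_re,
      abs_of_nonneg (hκ.trans hκr), hκr, hr]

lemma le_norm_of_mem_gammaContour {θ κ τ : ℝ} (hκ : 0 ≤ κ) {z : ℂ}
    (hz : z ∈ GammaContour θ κ τ) : κ ≤ ‖z‖ := by
  rcases norm_eq_or_re_eq_of_mem_gammaContour hκ hz with h | h
  exacts [h.ge, h.1]

lemma norm_mul_le_one_or_re_mul_le_of_mem_gammaContour {θ κ τ : ℝ} (hcos : Real.cos θ ≤ 0)
    (hτ : 0 < τ) (hκ : 0 ≤ κ) (hκτ : κ ≤ 1 / τ) {z : ℂ} (hz : z ∈ GammaContour θ κ τ) :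
    ‖z * τ‖ ≤ 1 ∨ ((z * τ).re ≤ Real.cos θ ∧ ‖z * τ‖ ≤ π / Real.sin θ) := by
  have hnorm : ‖z * τ‖ = ‖z‖ * τ := by simp [abs_of_pos hτ]
  rw [hnorm]
  rcases norm_eq_or_re_eq_of_mem_gammaContour hκ hz with h | ⟨-, hR, hre⟩
  · left
    rw [h, ← le_div_iff₀ hτ]
    exact hκτ
  rcases le_or_gt (‖z‖ * τ) 1 with h1 | h1
  · exact Or.inl h1
  refine Or.inr ⟨?_, ?_⟩
  · rw [Complex.re_mul_ofReal, hre]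
    nlinarith
  · calc ‖z‖ * τ ≤ π / (τ * Real.sin θ) * τ := by gcongr
      _ = π / Real.sin θ := by rw [mul_comm τ, ← div_div, div_mul_cancel₀ _ hτ.ne']

theorem stmt8_general (θ₀ θ : ℝ) (hθ₀ : θ₀ ∈ Set.Ioo (π / 2) π)
    (hθ : θ ∈ Set.Ioo (π / 2) θ₀) :
    ∃ C : ℝ, 0 < C ∧
      ∀ τ : ℝ, 0 < τ → ∀ κ : ℝ, 0 < κ → κ ≤ 1 / τ → ∀ z ∈ GammaContour θ κ τ,
        Complex.exp (z * (τ : ℂ)) - 1 ≠ 0 ∧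
        ‖z * (τ : ℂ) / (Complex.exp (z * (τ : ℂ)) - 1)‖ ≤ C ∧
        ‖Complex.exp (z * (τ : ℂ)) - 1 - z * (τ : ℂ)‖ ≤
          C * τ * ‖z‖ * ‖Complex.exp (z * (τ : ℂ)) - 1‖ := by
  have hsin : 0 < Real.sin θ :=
    Real.sin_pos_of_pos_of_lt_pi (by linarith [hθ.1, pi_pos]) (hθ.2.trans hθ₀.2)
  have hcos : Real.cos θ < 0 :=
    Real.cos_neg_of_pi_div_two_lt_of_lt hθ.1 (by linarith [hθ.2, hθ₀.2, pi_pos])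
  set c := min (1 / 4) ((1 - Real.exp (Real.cos θ)) / (π / Real.sin θ))
  have hc0 : 0 < c :=
    lt_min (by norm_num) (div_pos (by linarith [Real.exp_lt_one_iff.2 hcos]) (by positivity))
  have hc1 : c ≤ 1 := (min_le_left _ _).trans (by norm_num)
  refine ⟨2 / c, by positivity, fun τ hτ κ hκ hκτ z hz => ?_⟩
  have hbound : c * ‖z * τ‖ ≤ ‖Complex.exp (z * τ) - 1‖ :=
    mul_norm_le_norm_exp_sub_one hcos.le (by positivity)
      (norm_mul_le_one_or_re_mul_le_of_mem_gammaContour hcos.le hτ hκ.le hκτ hz)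
  have hzτ : 0 < ‖z * τ‖ := by
    simpa [abs_of_pos hτ] using mul_pos (hκ.trans_le (le_norm_of_mem_gammaContour hκ.le hz)) hτ
  refine ⟨norm_pos_iff.1 ((mul_pos hc0 hzτ).trans_le hbound),
    (norm_div_exp_sub_one_le hc0 hbound).trans (by gcongr; norm_num), ?_⟩
  have hnorm : ‖z * τ‖ = τ * ‖z‖ := by simp [abs_of_pos hτ, mul_comm]
  rw [mul_assoc (2 / c), ← hnorm]
  exact norm_exp_sub_one_sub_self_le_mul hc0 hc1 hbound

/-- Let `θ₀ ∈ (π/2, π)` with `cot θ₀ = −2/π` and `θ ∈ (π/2, θ₀)`.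
There exists `C > 0` depending only on `θ` such that for all `τ > 0`,
`κ ∈ (0, 1/τ]` and `z ∈ Γ(θ,κ,τ)`: `e^{zτ} − 1 ≠ 0`, `|zτ/(e^{zτ} − 1)| ≤ C` and
`|e^{zτ} − 1 − zτ| ≤ C τ |z| |e^{zτ} − 1|`. -/
theorem stmt8 (θ₀ θ : ℝ) (hθ₀ : θ₀ ∈ Set.Ioo (π / 2) π)
    (hcot : Real.cos θ₀ / Real.sin θ₀ = -2 / π)
    (hθ : θ ∈ Set.Ioo (π / 2) θ₀) :
    ∃ C : ℝ, 0 < C ∧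
      ∀ τ : ℝ, 0 < τ → ∀ κ : ℝ, 0 < κ → κ ≤ 1 / τ → ∀ z ∈ GammaContour θ κ τ,
        Complex.exp (z * (τ : ℂ)) - 1 ≠ 0 ∧
        ‖z * (τ : ℂ) / (Complex.exp (z * (τ : ℂ)) - 1)‖ ≤ C ∧
        ‖Complex.exp (z * (τ : ℂ)) - 1 - z * (τ : ℂ)‖ ≤
          C * τ * ‖z‖ * ‖Complex.exp (z * (τ : ℂ)) - 1‖ :=
  stmt8_general θ₀ θ hθ₀ hθ
end

section
/- Let d ∈ {1,2,3}, α ∈ (0, 2/d), θ ∈ (π/2, π), β ∈ (αd/2, 1), c > 0, and let (λ_j)_{j≥1} be positive reals with λ_j ≥ c j^{2/d} for all j ≥ 1. Define S(r) := ∑_{j=1}^∞ ( r^α/(r^α + λ_j) )² for r > 0. Then there exists a constant C > 0, independent of τ and t, such that for all τ > 0 and all t > 0: τ^{1−β} ∫₀^t ∫_{1/τ}^∞ S(r) · r^{−β} · e^{2 s r cos θ} dr ds ≤ C τ^{1 − α d/2}. -/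
open Real MeasureTheory intervalIntegral Set

/-!
An integral comparison shows `∑ⱼ (x / (x + λⱼ))² ≤ ∫₀^∞ (1 + (b u)^{2/d})⁻² du = O(x^{d/2})`
with `b = (c / x)^{d/2}`; the integral converges because `2 · 2/d > 1`. Hence `S(r) ≤ A r^{αd/2}`
and the integrand is at most `A r^m e^{2 s r cos θ}` with `m = αd/2 - β < 0`. Writing
`e^{2 s r cos θ}` as a product of two copies of `e^{-s r |cos θ|}`, bound one by
`(s r |cos θ|)^{-q}` and the other, using `r ≥ 1/τ`, by `e^{-s |cos θ| / τ}`. The `r`-integral is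
then `≲ τ^{q-m-1} s^{-q} e^{-s |cos θ| / τ}`, whose `s`-integral over `(0, ∞)` is a Gamma
integral `≲ τ^{1-q}`; the total `τ^{1-β} τ^{-m} = τ^{1-αd/2}` is independent of `t`.
-/

theorem exp_neg_le_rpow_neg {q y : ℝ} (hq0 : 0 ≤ q) (hq1 : q ≤ 1) (hy : 0 < y) :
    exp (-y) ≤ y ^ (-q) := by
  rw [exp_neg, rpow_neg hy.le]
  refine inv_anti₀ (rpow_pos_of_pos hy q) ?_
  rcases le_total y 1 with h | h
  · exact (rpow_le_one hy.le h hq0).trans (one_le_exp hy.le)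
  · calc y ^ q ≤ y ^ (1 : ℝ) := rpow_le_rpow_of_exponent_le h hq1
      _ = y := rpow_one y
      _ ≤ exp y := by linarith [add_one_le_exp y]

section EigenvalueSum

variable {p : ℝ}

theorem antitoneOn_inv_one_add_rpow_sq (hp : 0 ≤ p) :
    AntitoneOn (fun v : ℝ => (1 + v ^ p)⁻¹ ^ 2) (Ici 0) := by
  intro u (hu : 0 ≤ u) v (hv : 0 ≤ v) huv
  have : u ^ p ≤ v ^ p := rpow_le_rpow hu huv hp
  have : 0 ≤ u ^ p := rpow_nonneg hu p
  have : 0 ≤ v ^ p := rpow_nonneg hv p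
  dsimp only
  gcongr

theorem integrableOn_inv_one_add_rpow_sq (hp : 1 / 2 < p) :
    IntegrableOn (fun v : ℝ => (1 + v ^ p)⁻¹ ^ 2) (Ioi 0) := by
  have hmeas : AEStronglyMeasurable (fun v : ℝ => (1 + v ^ p)⁻¹ ^ 2) := by fun_prop
  rw [← Ioc_union_Ioi_eq_Ioi zero_le_one]
  refine IntegrableOn.union ?_ ?_
  · refine Measure.integrableOn_of_bounded (M := 1) measure_Ioc_lt_top.ne hmeas ?_
    filter_upwards [ae_restrict_mem measurableSet_Ioc] with v hv
    have : 0 ≤ v ^ p := rpow_nonneg hv.1.le p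
    rw [norm_pow, norm_inv, Real.norm_of_nonneg (by positivity)]
    exact pow_le_one₀ (by positivity) (inv_le_one_of_one_le₀ (by linarith))
  · refine (integrableOn_Ioi_rpow_of_lt (a := -(2 * p)) (by linarith) one_pos).mono'
      hmeas.restrict ?_
    filter_upwards [ae_restrict_mem measurableSet_Ioi] with v (hv : 1 < v)
    have hvp : 0 < v ^ p := rpow_pos_of_pos (by linarith) p
    rw [norm_pow, norm_inv, Real.norm_of_nonneg (by positivity), mul_comm, rpow_neg (by linarith),
      rpow_mul (by linarith), rpow_two, ← inv_pow]
    gcongr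
    linarith

theorem integral_inv_one_add_rpow_sq_pos (hp : 1 / 2 < p) :
    0 < ∫ v in Ioi (0 : ℝ), (1 + v ^ p)⁻¹ ^ 2 := by
  rw [setIntegral_pos_iff_support_of_nonneg_ae (ae_of_all _ fun _ => sq_nonneg _)
    (integrableOn_inv_one_add_rpow_sq hp)]
  have hsupp : Function.support (fun v : ℝ => (1 + v ^ p)⁻¹ ^ 2) ∩ Ioi 0 = Ioi 0 := by
    refine inter_eq_right.2 fun v (hv : (0 : ℝ) < v) => ?_
    have : 0 < v ^ p := rpow_pos_of_pos hv p
    exact (by positivity : 0 < (1 + v ^ p)⁻¹ ^ 2).ne'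
  rw [hsupp]
  simp

theorem tsum_div_add_sq_le {c x : ℝ} {lam : ℕ → ℝ} (hc : 0 < c) (hp : 1 / 2 < p)
    (hlow : ∀ j : ℕ, c * ((j : ℝ) + 1) ^ p ≤ lam j) (hx : 0 < x) :
    ∑' j, (x / (x + lam j)) ^ 2 ≤ (∫ v in Ioi (0 : ℝ), (1 + v ^ p)⁻¹ ^ 2) * (x / c) ^ p⁻¹ := by
  set g : ℝ → ℝ := fun v => (1 + v ^ p)⁻¹ ^ 2
  set b : ℝ := (c / x) ^ p⁻¹
  have hb : 0 < b := by positivity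
  have hbp : b ^ p = c / x := by
    rw [← rpow_mul (by positivity), inv_mul_cancel₀ (by linarith), rpow_one]
  have hanti : AntitoneOn (fun u => g (b * u)) (Ici 0) := fun u (hu : 0 ≤ u) v (hv : 0 ≤ v) huv =>
    antitoneOn_inv_one_add_rpow_sq (by linarith) (mul_nonneg hb.le hu) (mul_nonneg hb.le hv)
      (by gcongr)
  have hint : IntegrableOn (fun u => g (b * u)) (Ioi 0) := by
    have := (integrableOn_Ioi_comp_mul_left_iff g 0 hb).2
    rw [mul_zero] at this
    exact this (integrableOn_inv_one_add_rpow_sq hp)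
  have hnonneg : ∀ u ∈ Ioi (0 : ℝ), 0 ≤ g (b * u) := fun _ _ => sq_nonneg _
  have hsummable : Summable fun j : ℕ => g (b * ((j + 1 : ℕ) : ℝ)) :=
    (summable_nat_add_iff 1).2 (hanti.summable_of_integrableOn_Ioi_zero hint hnonneg)
  have hterm : ∀ j : ℕ, (x / (x + lam j)) ^ 2 ≤ g (b * ((j + 1 : ℕ) : ℝ)) := by
    intro j
    have hj : 0 < ((j : ℝ) + 1) ^ p := by positivity
    have hlam : 0 < lam j := by nlinarith [hlow j]
    rw [show x / (x + lam j) = (1 + lam j / x)⁻¹ by field_simp]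
    simp only [g]
    rw [Nat.cast_add_one, mul_rpow hb.le (by positivity), hbp]
    gcongr
    rw [div_mul_eq_mul_div]
    gcongr
    exact hlow j
  calc ∑' j, (x / (x + lam j)) ^ 2 ≤ ∑' j : ℕ, g (b * ((j + 1 : ℕ) : ℝ)) :=
        (hsummable.of_nonneg_of_le (fun _ => sq_nonneg _) hterm).tsum_le_tsum hterm hsummable
    _ ≤ ∫ u in Ioi 0, g (b * u) := hanti.tsum_add_one_le_integral hint hnonneg
    _ = b⁻¹ * ∫ v in Ioi 0, g v := by
        rw [integral_comp_mul_left_Ioi g 0 hb, mul_zero, smul_eq_mul]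
    _ = _ := by rw [mul_comm, ← inv_rpow (by positivity), inv_div]

end EigenvalueSum

theorem intervalIntegral_le_setIntegral_Ioi {F G : ℝ → ℝ} {t : ℝ} (ht : 0 ≤ t)
    (hF : ∀ s ∈ Ioc 0 t, 0 ≤ F s) (hG : ∀ s ∈ Ioi (0 : ℝ), 0 ≤ G s)
    (hFG : ∀ s ∈ Ioc 0 t, F s ≤ G s) (hGi : IntegrableOn G (Ioi 0)) :
    ∫ s in (0 : ℝ)..t, F s ≤ ∫ s in Ioi 0, G s := by
  rw [intervalIntegral.integral_of_le ht]
  calc ∫ s in Ioc 0 t, F s ≤ ∫ s in Ioc 0 t, G s :=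
        integral_mono_of_nonneg ((ae_restrict_iff' measurableSet_Ioc).2 (ae_of_all _ hF))
          (hGi.mono_set Ioc_subset_Ioi_self)
          ((ae_restrict_iff' measurableSet_Ioc).2 (ae_of_all _ hFG))
    _ ≤ ∫ s in Ioi 0, G s :=
        setIntegral_mono_set hGi ((ae_restrict_iff' measurableSet_Ioi).2 (ae_of_all _ hG))
          (ae_of_all _ Ioc_subset_Ioi_self)

section ExponentialKernel

variable {W : ℝ → ℝ} {A m γ : ℝ}

theorem setIntegral_Ioi_mul_exp_le {q κ s : ℝ} (hq0 : 0 ≤ q) (hq1 : q ≤ 1) (hmq : m - q < -1)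
    (hγ : γ < 0) (hκ : 0 < κ) (hs : 0 < s)
    (hW0 : ∀ r > 0, 0 ≤ W r) (hW : ∀ r > 0, W r ≤ A * r ^ m) :
    ∫ r in Ioi κ, W r * exp (2 * s * r * γ) ≤
      A * (-γ) ^ (-q) * (-κ ^ (m - q + 1) / (m - q + 1)) * (s ^ (-q) * exp (-(-γ * κ * s))) := by
  set K := A * (-γ) ^ (-q) * s ^ (-q) * exp (-(-γ * κ * s))
  have hpt : ∀ r ∈ Ioi κ, W r * exp (2 * s * r * γ) ≤ K * r ^ (m - q) := by
    intro r (hr : κ < r)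
    have hr0 : 0 < r := hκ.trans hr
    have hsplit : exp (2 * s * r * γ) = exp (-(s * r * -γ)) * exp (s * r * γ) := by
      rw [← exp_add]; ring_nf
    have hy : 0 < s * r * -γ := mul_pos (mul_pos hs hr0) (neg_pos.2 hγ)
    have hfirst : exp (-(s * r * -γ)) ≤ (s * r * -γ) ^ (-q) := exp_neg_le_rpow_neg hq0 hq1 hy
    have hsecond : exp (s * r * γ) ≤ exp (-(-γ * κ * s)) := by
      rw [exp_le_exp]; nlinarith [mul_pos hs (sub_pos.2 hr)]
    calc W r * exp (2 * s * r * γ)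
        ≤ A * r ^ m * ((s * r * -γ) ^ (-q) * exp (-(-γ * κ * s))) := by
          rw [hsplit]
          have : 0 ≤ A * r ^ m := (hW0 r hr0).trans (hW r hr0)
          gcongr
          exact hW r hr0
      _ = K * r ^ (m - q) := by
          rw [mul_rpow (mul_pos hs hr0).le (neg_pos.2 hγ).le, mul_rpow hs.le hr0.le, rpow_sub hr0,
            rpow_neg hr0.le]
          ring
  calc ∫ r in Ioi κ, W r * exp (2 * s * r * γ) ≤ ∫ r in Ioi κ, K * r ^ (m - q) := by
        refine integral_mono_of_nonneg ?_ ((integrableOn_Ioi_rpow_of_lt hmq hκ).const_mul K) ?_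
        · filter_upwards [ae_restrict_mem measurableSet_Ioi] with r (hr : κ < r)
          exact mul_nonneg (hW0 r (hκ.trans hr)) (exp_pos _).le
        · filter_upwards [ae_restrict_mem measurableSet_Ioi] using hpt
    _ = _ := by rw [MeasureTheory.integral_const_mul, integral_Ioi_rpow_of_lt hmq hκ]; ring

theorem exists_integral_setIntegral_Ioi_mul_exp_le (hA : 0 < A) (hm : m < 0) (hγ : γ < 0)
    (hW0 : ∀ r > 0, 0 ≤ W r) (hW : ∀ r > 0, W r ≤ A * r ^ m) :
    ∃ C, 0 < C ∧ ∀ κ > 0, ∀ t ≥ 0,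
      ∫ s in (0 : ℝ)..t, ∫ r in Ioi κ, W r * exp (2 * s * r * γ) ≤ C * κ ^ m := by
  -- the `r`-integral needs `m + 1 < q`, the Gamma integral needs `q < 1`
  set q := max 0 (1 + m / 2)
  have hq0 : 0 ≤ q := le_max_left _ _
  have hq1 : 0 < 1 - q := sub_pos.2 (max_lt one_pos (by linarith))
  have hmq : m - q < -1 := by linarith [le_max_right 0 (1 + m / 2)]
  have hν : 0 < -γ := neg_pos.2 hγ
  have hΓ : 0 < Gamma (1 - q) := Gamma_pos_of_pos hq1
  have hqm : 0 < q - m - 1 := by linarith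
  refine ⟨A * Gamma (1 - q) / (-γ * (q - m - 1)), by positivity, fun κ hκ t ht => ?_⟩
  have hb : 0 < -γ * κ := mul_pos hν hκ
  set K := A * (-γ) ^ (-q) * (-κ ^ (m - q + 1) / (m - q + 1))
  have hK : 0 < K := by
    have : 0 < -(m - q + 1) := by linarith
    have : 0 < κ ^ (m - q + 1) := rpow_pos_of_pos hκ _
    have : 0 < (-γ) ^ (-q) := rpow_pos_of_pos hν _
    simp only [K, neg_div, ← div_neg]
    positivity
  have hφ : IntegrableOn (fun s => s ^ (1 - q - 1) * exp (-(-γ * κ * s))) (Ioi 0) := by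
    refine (integrableOn_rpow_mul_exp_neg_mul_rpow (s := 1 - q - 1) (by linarith) one_pos
      hb).congr_fun (fun s _ => ?_) measurableSet_Ioi
    simp only [rpow_one, neg_mul]
  calc ∫ s in (0 : ℝ)..t, ∫ r in Ioi κ, W r * exp (2 * s * r * γ)
      ≤ ∫ s in Ioi 0, K * (s ^ (1 - q - 1) * exp (-(-γ * κ * s))) := by
        refine intervalIntegral_le_setIntegral_Ioi ht ?_ ?_ (fun s hs => ?_) (hφ.const_mul K)
        · exact fun s _ => setIntegral_nonneg measurableSet_Ioi fun r (hr : κ < r) =>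
            mul_nonneg (hW0 r (hκ.trans hr)) (exp_pos _).le
        · exact fun s (hs : 0 < s) => by positivity
        · rw [sub_sub_cancel_left]
          exact setIntegral_Ioi_mul_exp_le hq0 (by linarith) hmq hγ hκ hs.1 hW0 hW
    _ = K * ((1 / (-γ * κ)) ^ (1 - q) * Gamma (1 - q)) := by
        rw [MeasureTheory.integral_const_mul, integral_rpow_mul_exp_neg_mul_Ioi hq1 hb]
    _ = A * Gamma (1 - q) / (-γ * (q - m - 1)) * κ ^ m := by
        have hγpow : (-γ) ^ (-q) * (-γ) ^ (-(1 - q)) = (-γ)⁻¹ := by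
          rw [← rpow_add hν, show -q + -(1 - q) = -1 by ring, rpow_neg_one]
        have hκpow : κ ^ (m - q + 1) * κ ^ (-(1 - q)) = κ ^ m := by
          rw [← rpow_add hκ]; ring_nf
        rw [one_div, inv_rpow hb.le, ← rpow_neg hb.le, mul_rpow hν.le hκ.le]
        have : m - q + 1 ≠ 0 := by linarith
        calc K * ((-γ) ^ (-(1 - q)) * κ ^ (-(1 - q)) * Gamma (1 - q))
            = A * Gamma (1 - q) * ((-γ) ^ (-q) * (-γ) ^ (-(1 - q))) *
                (κ ^ (m - q + 1) * κ ^ (-(1 - q))) / (q - m - 1) := by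
              simp only [K]; field_simp; ring
          _ = _ := by rw [hγpow, hκpow]; field_simp

end ExponentialKernel

theorem stmt11_general (d : ℕ) (hd : d = 1 ∨ d = 2 ∨ d = 3) (α θ β c : ℝ)
    (hθ : θ ∈ Set.Ioo (π / 2) π)
    (hβ : β ∈ Set.Ioo (α * (d : ℝ) / 2) 1) (hc : 0 < c)
    (lam : ℕ → ℝ)
    (hlow : ∀ j : ℕ, c * ((j : ℝ) + 1) ^ ((2 : ℝ) / (d : ℝ)) ≤ lam j) :
    ∃ C : ℝ, 0 < C ∧
      ∀ τ : ℝ, 0 < τ → ∀ t : ℝ, 0 < t →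
        τ ^ (1 - β) * ∫ s in (0 : ℝ)..t, ∫ r in Set.Ioi (1 / τ),
            (∑' j : ℕ, (r ^ α / (r ^ α + lam j)) ^ 2) * r ^ (-β) *
              Real.exp (2 * s * r * Real.cos θ) ≤
          C * τ ^ (1 - α * (d : ℝ) / 2) := by
  have hp : 1 / 2 < (2 : ℝ) / d := by rcases hd with rfl | rfl | rfl <;> norm_num
  have hcos : cos θ < 0 := cos_neg_of_pi_div_two_lt_of_lt hθ.1 (by linarith [hθ.2, pi_pos])
  set I := ∫ v in Ioi (0 : ℝ), (1 + v ^ ((2 : ℝ) / d))⁻¹ ^ 2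
  have hI : 0 < I := integral_inv_one_add_rpow_sq_pos hp
  have hW : ∀ r > 0, (∑' j : ℕ, (r ^ α / (r ^ α + lam j)) ^ 2) * r ^ (-β) ≤
      I * c ^ (-(d / 2 : ℝ)) * r ^ (α * d / 2 - β) := by
    intro r hr
    calc _ ≤ I * (r ^ α / c) ^ ((2 : ℝ) / d)⁻¹ * r ^ (-β) := by
          gcongr
          exact tsum_div_add_sq_le hc hp hlow (rpow_pos_of_pos hr α)
      _ = _ := by
          rw [inv_div, div_rpow (rpow_pos_of_pos hr α).le hc.le, ← rpow_mul hr.le, rpow_neg hc.le,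
            sub_eq_add_neg, rpow_add hr]
          ring_nf
  have hW0 : ∀ r > 0, 0 ≤ (∑' j : ℕ, (r ^ α / (r ^ α + lam j)) ^ 2) * r ^ (-β) :=
    fun r hr => mul_nonneg (tsum_nonneg fun _ => sq_nonneg _) (rpow_nonneg hr.le _)
  obtain ⟨C, hC, hbound⟩ := exists_integral_setIntegral_Ioi_mul_exp_le (by positivity)
    (by linarith [hβ.1]) hcos hW0 hW
  refine ⟨C, hC, fun τ hτ t ht => ?_⟩
  calc _ ≤ τ ^ (1 - β) * (C * (1 / τ) ^ (α * d / 2 - β)) :=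
        mul_le_mul_of_nonneg_left (hbound _ (by positivity) t ht.le) (by positivity)
    _ = C * τ ^ (1 - α * d / 2) := by
        rw [one_div, inv_rpow hτ.le, ← rpow_neg hτ.le, mul_left_comm, ← rpow_add hτ]
        ring_nf

/-- Let `d ∈ {1,2,3}`, `α ∈ (0, 2/d)`, `θ ∈ (π/2, π)`,
`β ∈ (αd/2, 1)`, `c > 0`, and let `(λ_j)_{j≥1}` (here `lam j = λ_{j+1}`) be positive
reals with `λ_j ≥ c j^{2/d}`. With `S(r) := ∑_{j≥1} (r^α/(r^α+λ_j))²`, there is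
`C > 0` independent of `τ`, `t` such that for all `τ > 0` and `t > 0`:
`τ^{1−β} ∫₀^t ∫_{1/τ}^∞ S(r) r^{−β} e^{2sr cos θ} dr ds ≤ C τ^{1−αd/2}`. -/
theorem stmt11 (d : ℕ) (hd : d = 1 ∨ d = 2 ∨ d = 3) (α θ β c : ℝ)
    (hα0 : 0 < α) (hαd : α < 2 / (d : ℝ)) (hθ : θ ∈ Set.Ioo (π / 2) π)
    (hβ : β ∈ Set.Ioo (α * (d : ℝ) / 2) 1) (hc : 0 < c)
    (lam : ℕ → ℝ) (hpos : ∀ j, 0 < lam j)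
    (hlow : ∀ j : ℕ, c * ((j : ℝ) + 1) ^ ((2 : ℝ) / (d : ℝ)) ≤ lam j) :
    ∃ C : ℝ, 0 < C ∧
      ∀ τ : ℝ, 0 < τ → ∀ t : ℝ, 0 < t →
        τ ^ (1 - β) * ∫ s in (0 : ℝ)..t, ∫ r in Set.Ioi (1 / τ),
            (∑' j : ℕ, (r ^ α / (r ^ α + lam j)) ^ 2) * r ^ (-β) *
              Real.exp (2 * s * r * Real.cos θ) ≤
          C * τ ^ (1 - α * (d : ℝ) / 2) :=
  stmt11_general d hd α θ β c hθ hβ hc lam hlow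
end

section
/- Let d ∈ {1,2,3}, α ∈ (0, 2/d), c > 0, κ > 0, and let θ ∈ (π/2, π) satisfy αθ < π. Let (λ_j)_{j≥1} be positive reals with λ_j ≥ c j^{2/d} for all j ≥ 1. For s > 0 and λ > 0 define F(s, λ) := (1/(2πi)) [ ∫_κ^∞ ( e^{s r e^{iθ}} (r e^{iθ})^{α−1} ((r e^{iθ})^α + λ)^{−1} e^{iθ} − e^{s r e^{−iθ}} (r e^{−iθ})^{α−1} ((r e^{−iθ})^α + λ)^{−1} e^{−iθ} ) dr + iκ ∫_{−θ}^{θ} e^{s κ e^{iψ}} (κ e^{iψ})^{α−1} ((κ e^{iψ})^α + λ)^{−1} e^{iψ} dψ ]. Then for every T > 0, ∑_{j=1}^∞ ∫₀^T |F(s, λ_j)|² ds < ∞. -/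
/-!
Along the contour `z = x e^{iφ}`, `|φ| ≤ θ`, the argument of `z^α` stays in `[-αθ, αθ] ⊂ (-π, π)`,
so `|z^α + λ| ≥ (1 - |cos αθ|) max(x^α, λ) ≥ (1 - |cos αθ|) x^{α(1-γ)} λ^γ` for every `γ ∈ [0, 1]`.
On the rays `|e^{sz}| = e^{-s x |cos θ|}`, so a Gamma integral bounds the ray part by a multiple of
`λ^{-γ} s^{-αγ}`, while the arc contributes `O(λ^{-γ})` uniformly in `s ≤ T`. Hence
`|F(s, λ)| ≤ λ^{-γ} (A s^{-αγ} + B)`. Since `αd < 2` and `d ≤ 3` one can take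
`d/4 < γ < min(1, 1/(2α))`: then `s^{-2αγ}` is integrable at `0` and
`∑ λ_j^{-2γ} ≤ c^{-2γ} ∑ j^{-4γ/d} < ∞`.
-/

open Real MeasureTheory intervalIntegral

/-- The kernel `F(s, λ)`: the explicit parametrization of the contour integral
`(1/2πi) ∫_{Γ_{θ,κ}} e^{zs} z^{α−1}(z^α+λ)⁻¹ dz` over the sectorial contour
`Γ_{θ,κ} = {κe^{iψ} : |ψ| ≤ θ} ∪ {re^{±iθ} : r ≥ κ}` (complex powers in the
principal branch). -/
noncomputable def Fker (α θ κ s lmb : ℝ) : ℂ :=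
  (1 / (2 * (π : ℂ) * Complex.I)) *
    ((∫ r in Set.Ioi κ,
        (Complex.exp ((s : ℂ) * (r : ℂ) * Complex.exp ((θ : ℂ) * Complex.I)) *
            ((r : ℂ) * Complex.exp ((θ : ℂ) * Complex.I)) ^ ((α : ℂ) - 1) *
            (((r : ℂ) * Complex.exp ((θ : ℂ) * Complex.I)) ^ (α : ℂ) + (lmb : ℂ))⁻¹ *
            Complex.exp ((θ : ℂ) * Complex.I)
          - Complex.exp ((s : ℂ) * (r : ℂ) * Complex.exp (-(θ : ℂ) * Complex.I)) *
            ((r : ℂ) * Complex.exp (-(θ : ℂ) * Complex.I)) ^ ((α : ℂ) - 1) *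
            (((r : ℂ) * Complex.exp (-(θ : ℂ) * Complex.I)) ^ (α : ℂ) + (lmb : ℂ))⁻¹ *
            Complex.exp (-(θ : ℂ) * Complex.I)))
      + Complex.I * (κ : ℂ) *
        ∫ ψ in (-θ)..θ,
          Complex.exp ((s : ℂ) * (κ : ℂ) * Complex.exp ((ψ : ℂ) * Complex.I)) *
            ((κ : ℂ) * Complex.exp ((ψ : ℂ) * Complex.I)) ^ ((α : ℂ) - 1) *
            (((κ : ℂ) * Complex.exp ((ψ : ℂ) * Complex.I)) ^ (α : ℂ) + (lmb : ℂ))⁻¹ *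
            Complex.exp ((ψ : ℂ) * Complex.I))

lemma ofReal_mul_exp_mul_I_cpow {x φ : ℝ} (hx : 0 < x) (hφ : φ ∈ Set.Ioc (-π) π) (β : ℝ) :
    ((x : ℂ) * Complex.exp (φ * Complex.I)) ^ (β : ℂ)
      = ((x ^ β : ℝ) : ℂ) * Complex.exp ((β * φ : ℝ) * Complex.I) := by
  have hz : (x : ℂ) * Complex.exp (φ * Complex.I) ≠ 0 :=
    mul_ne_zero (by exact_mod_cast hx.ne') (Complex.exp_ne_zero _)
  have hlog : Complex.log ((x : ℂ) * Complex.exp (φ * Complex.I)) = Real.log x + φ * Complex.I := by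
    rw [Complex.log, norm_mul, Complex.norm_exp_ofReal_mul_I, Complex.norm_of_nonneg hx.le,
      mul_one, Complex.arg_real_mul _ hx, Complex.exp_mul_I, Complex.arg_cos_add_sin_mul_I hφ]
  rw [Complex.cpow_def_of_ne_zero hz, hlog, Real.rpow_def_of_pos hx, add_mul, Complex.exp_add]
  push_cast
  ring_nf

lemma one_sub_mul_max_le_norm_add {y l b K : ℝ} (hy : 0 ≤ y) (hl : 0 ≤ l) (hK : 0 ≤ K)
    (hb : -K ≤ cos b) :
    (1 - K) * max y l ≤ ‖(y : ℂ) * Complex.exp (b * Complex.I) + l‖ := by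
  rcases le_or_gt 1 K with hK1 | hK1
  · exact (mul_nonpos_of_nonpos_of_nonneg (by linarith) (le_max_of_le_left hy)).trans
      (norm_nonneg _)
  have hsq : ‖(y : ℂ) * Complex.exp (b * Complex.I) + l‖ ^ 2
      = y ^ 2 + 2 * y * l * cos b + l ^ 2 := by
    rw [Complex.sq_norm, Complex.normSq_apply]
    simp only [Complex.add_re, Complex.add_im, Complex.mul_re, Complex.mul_im, Complex.ofReal_re,
      Complex.ofReal_im, Complex.exp_ofReal_mul_I_re, Complex.exp_ofReal_mul_I_im]
    nlinarith [sin_sq_add_cos_sq b]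
  refine abs_le_of_sq_le_sq' ?_ (norm_nonneg _) |>.2
  rw [hsq, mul_pow]
  rcases max_cases y l with ⟨hm, _⟩ | ⟨hm, _⟩ <;> rw [hm] <;>
    nlinarith [mul_nonneg hy hl, mul_nonneg (mul_nonneg hy hl) (by linarith : 0 ≤ cos b + K),
      mul_nonneg hK (sq_nonneg (y - l)), mul_nonneg hK (by linarith : 0 ≤ 1 - K)]

lemma rpow_mul_rpow_le_max {a b p : ℝ} (ha : 0 ≤ a) (hb : 0 ≤ b) (hp0 : 0 ≤ p) (hp1 : p ≤ 1) :
    a ^ (1 - p) * b ^ p ≤ max a b := by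
  refine (Real.geom_mean_le_arith_mean2_weighted (by linarith) hp0 ha hb (by ring)).trans ?_
  nlinarith [le_max_left a b, le_max_right a b]

lemma abs_cos_lt_one_of_mem_Ioo {t : ℝ} (h0 : 0 < t) (hπ : t < π) : |cos t| < 1 :=
  (sq_lt_one_iff_abs_lt_one _).1 (by nlinarith [sin_sq_add_cos_sq t, sin_pos_of_pos_of_lt_pi h0 hπ])

lemma norm_inv_cpow_add_le {α θ γ x φ lmb : ℝ} (hα : 0 < α) (hθ : 0 < θ) (hθπ : θ < π)
    (hαθ : α * θ < π) (hγ0 : 0 ≤ γ) (hγ1 : γ ≤ 1) (hx : 0 < x) (hl : 0 < lmb) (hφ : |φ| ≤ θ) :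
    ‖(((x : ℂ) * Complex.exp (φ * Complex.I)) ^ (α : ℂ) + lmb)⁻¹‖
      ≤ (1 - |cos (α * θ)|)⁻¹ * (x ^ (-(α * (1 - γ))) * lmb ^ (-γ)) := by
  set K := |cos (α * θ)|
  have hK : 0 < 1 - K := by linarith [abs_cos_lt_one_of_mem_Ioo (by positivity) hαθ]
  have hcos : -K ≤ cos (α * φ) := by
    have hαφ : |α * φ| ≤ α * θ := by
      rw [abs_mul, abs_of_pos hα]
      exact mul_le_mul_of_nonneg_left hφ hα.le
    calc -K ≤ cos (α * θ) := neg_abs_le _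
      _ ≤ cos |α * φ| := cos_le_cos_of_nonneg_of_le_pi (abs_nonneg _) hαθ.le hαφ
      _ = cos (α * φ) := cos_abs _
  have hφ' : φ ∈ Set.Ioc (-π) π := by constructor <;> linarith [abs_le.1 hφ]
  have hxα : 0 < x ^ α := rpow_pos_of_pos hx α
  have hlow : (1 - K) * ((x ^ α) ^ (1 - γ) * lmb ^ γ)
      ≤ ‖((x ^ α : ℝ) : ℂ) * Complex.exp ((α * φ : ℝ) * Complex.I) + lmb‖ :=
    (mul_le_mul_of_nonneg_left (rpow_mul_rpow_le_max hxα.le hl.le hγ0 hγ1) hK.le).trans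
      (one_sub_mul_max_le_norm_add hxα.le hl.le (abs_nonneg _) hcos)
  rw [ofReal_mul_exp_mul_I_cpow hx hφ', norm_inv]
  refine (inv_anti₀ (by positivity) hlow).trans_eq ?_
  rw [mul_inv, mul_inv, ← rpow_neg hxα.le, ← rpow_neg hl.le, ← rpow_mul hx.le]
  ring_nf

/-- The integrand of `Fker` at the contour point `x e^{iφ}`; the last factor comes from `dz`. -/
noncomputable def contourTerm (α s lmb x φ : ℝ) : ℂ :=
  Complex.exp ((s : ℂ) * (x : ℂ) * Complex.exp ((φ : ℂ) * Complex.I)) *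
    ((x : ℂ) * Complex.exp ((φ : ℂ) * Complex.I)) ^ ((α : ℂ) - 1) *
    (((x : ℂ) * Complex.exp ((φ : ℂ) * Complex.I)) ^ (α : ℂ) + (lmb : ℂ))⁻¹ *
    Complex.exp ((φ : ℂ) * Complex.I)

lemma Fker_eq_contourTerm (α θ κ s lmb : ℝ) :
    Fker α θ κ s lmb = (1 / (2 * (π : ℂ) * Complex.I)) *
      ((∫ r in Set.Ioi κ, contourTerm α s lmb r θ - contourTerm α s lmb r (-θ))
        + Complex.I * κ * ∫ ψ in (-θ)..θ, contourTerm α s lmb κ ψ) := by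
  simp only [Fker, contourTerm, Complex.ofReal_neg]

lemma norm_contourTerm_le {α θ γ s x φ lmb : ℝ} (hα : 0 < α) (hθ : 0 < θ) (hθπ : θ < π)
    (hαθ : α * θ < π) (hγ0 : 0 ≤ γ) (hγ1 : γ ≤ 1) (hx : 0 < x) (hl : 0 < lmb) (hφ : |φ| ≤ θ) :
    ‖contourTerm α s lmb x φ‖
      ≤ (1 - |cos (α * θ)|)⁻¹ * lmb ^ (-γ) * (x ^ (α * γ - 1) * exp (s * x * cos φ)) := by
  have hexp : ‖Complex.exp ((s : ℂ) * x * Complex.exp (φ * Complex.I))‖ = exp (s * x * cos φ) := by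
    rw [Complex.norm_exp]
    simp only [Complex.mul_re, Complex.mul_im, Complex.ofReal_re, Complex.ofReal_im,
      Complex.exp_ofReal_mul_I_re, Complex.exp_ofReal_mul_I_im]
    ring_nf
  have hpow : ‖((x : ℂ) * Complex.exp (φ * Complex.I)) ^ ((α : ℂ) - 1)‖ = x ^ (α - 1) := by
    rw [← Complex.ofReal_one, ← Complex.ofReal_sub, Complex.norm_cpow_real, norm_mul,
      Complex.norm_exp_ofReal_mul_I, Complex.norm_of_nonneg hx.le, mul_one]
  have hinv := norm_inv_cpow_add_le hα hθ hθπ hαθ hγ0 hγ1 hx hl hφ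
  rw [contourTerm, norm_mul, norm_mul, norm_mul, hexp, hpow, Complex.norm_exp_ofReal_mul_I, mul_one]
  calc exp (s * x * cos φ) * x ^ (α - 1)
        * ‖(((x : ℂ) * Complex.exp (φ * Complex.I)) ^ (α : ℂ) + lmb)⁻¹‖
      ≤ exp (s * x * cos φ) * x ^ (α - 1)
          * ((1 - |cos (α * θ)|)⁻¹ * (x ^ (-(α * (1 - γ))) * lmb ^ (-γ))) := by gcongr
    _ = (1 - |cos (α * θ)|)⁻¹ * lmb ^ (-γ)
          * ((x ^ (α - 1) * x ^ (-(α * (1 - γ)))) * exp (s * x * cos φ)) := by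
      ring
    _ = _ := by rw [← rpow_add hx]; ring_nf

lemma integrableOn_rpow_mul_exp_neg_mul {a b : ℝ} (ha : 0 < a) (hb : 0 < b) :
    IntegrableOn (fun r : ℝ => r ^ (a - 1) * exp (-(b * r))) (Set.Ioi 0) := by
  simpa only [rpow_one, neg_mul] using
    integrableOn_rpow_mul_exp_neg_mul_rpow (p := 1) (by linarith) one_pos hb

section Contour

variable {α θ γ κ s lmb : ℝ}

lemma norm_integral_ray_le (hα : 0 < α) (hθ : θ ∈ Set.Ioo (π / 2) π) (hαθ : α * θ < π)
    (hγ0 : 0 < γ) (hγ1 : γ ≤ 1) (hκ : 0 ≤ κ) (hs : 0 < s) (hl : 0 < lmb) :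
    ‖∫ r in Set.Ioi κ, contourTerm α s lmb r θ - contourTerm α s lmb r (-θ)‖
      ≤ 2 * (1 - |cos (α * θ)|)⁻¹ * lmb ^ (-γ)
          * ((1 / (s * -cos θ)) ^ (α * γ) * Gamma (α * γ)) := by
  obtain ⟨hθ1, hθ2⟩ := hθ
  have hθ0 : 0 < θ := by linarith [pi_pos]
  have hb : 0 < s * -cos θ :=
    mul_pos hs (neg_pos.2 (cos_neg_of_pi_div_two_lt_of_lt hθ1 (by linarith)))
  set C := 2 * (1 - |cos (α * θ)|)⁻¹ * lmb ^ (-γ)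
  have hC : 0 ≤ C := by
    have hK : 0 < 1 - |cos (α * θ)| := by linarith [abs_cos_lt_one_of_mem_Ioo (by positivity) hαθ]
    positivity
  have hG : IntegrableOn (fun r => C * (r ^ (α * γ - 1) * exp (-((s * -cos θ) * r))))
      (Set.Ioi 0) :=
    (integrableOn_rpow_mul_exp_neg_mul (mul_pos hα hγ0) hb).const_mul C
  have hpt : ∀ r ∈ Set.Ioi κ, ‖contourTerm α s lmb r θ - contourTerm α s lmb r (-θ)‖
      ≤ C * (r ^ (α * γ - 1) * exp (-((s * -cos θ) * r))) := by
    intro r hr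
    have hr0 : 0 < r := hκ.trans_lt hr
    have hpos := norm_contourTerm_le (s := s) hα hθ0 hθ2 hαθ hγ0.le hγ1 hr0 hl (φ := θ)
      (abs_of_pos hθ0).le
    have hneg := norm_contourTerm_le (s := s) hα hθ0 hθ2 hαθ hγ0.le hγ1 hr0 hl (φ := -θ)
      (by rw [abs_neg, abs_of_pos hθ0])
    rw [cos_neg] at hneg
    have hexp : s * r * cos θ = -((s * -cos θ) * r) := by ring
    rw [hexp] at hpos hneg
    calc _ ≤ _ := norm_sub_le _ _
      _ ≤ _ := add_le_add hpos hneg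
      _ = _ := by ring
  calc ‖∫ r in Set.Ioi κ, contourTerm α s lmb r θ - contourTerm α s lmb r (-θ)‖
      ≤ ∫ r in Set.Ioi κ, C * (r ^ (α * γ - 1) * exp (-((s * -cos θ) * r))) :=
        norm_integral_le_of_norm_le (hG.mono_set (Set.Ioi_subset_Ioi hκ))
          ((ae_restrict_iff' measurableSet_Ioi).2 (ae_of_all _ hpt))
    _ ≤ ∫ r in Set.Ioi 0, C * (r ^ (α * γ - 1) * exp (-((s * -cos θ) * r))) := by
        refine setIntegral_mono_set hG ?_ (Set.Ioi_subset_Ioi hκ).eventuallyLE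
        filter_upwards [ae_restrict_mem measurableSet_Ioi] with r (hr : 0 < r)
        positivity
    _ = C * ((1 / (s * -cos θ)) ^ (α * γ) * Gamma (α * γ)) := by
        rw [MeasureTheory.integral_const_mul,
          integral_rpow_mul_exp_neg_mul_Ioi (mul_pos hα hγ0) hb]

lemma norm_integral_arc_le {T : ℝ} (hα : 0 < α) (hθ : 0 < θ) (hθπ : θ < π) (hαθ : α * θ < π)
    (hγ0 : 0 ≤ γ) (hγ1 : γ ≤ 1) (hκ : 0 < κ) (hs : 0 ≤ s) (hsT : s ≤ T) (hl : 0 < lmb) :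
    ‖∫ ψ in (-θ)..θ, contourTerm α s lmb κ ψ‖
      ≤ (1 - |cos (α * θ)|)⁻¹ * lmb ^ (-γ) * (κ ^ (α * γ - 1) * exp (T * κ)) * (2 * θ) := by
  have hpt : ∀ ψ ∈ Set.uIoc (-θ) θ, ‖contourTerm α s lmb κ ψ‖
      ≤ (1 - |cos (α * θ)|)⁻¹ * lmb ^ (-γ) * (κ ^ (α * γ - 1) * exp (T * κ)) := by
    intro ψ hψ
    rw [Set.uIoc_of_le (by linarith)] at hψ
    have hK : 0 < 1 - |cos (α * θ)| := by linarith [abs_cos_lt_one_of_mem_Ioo (by positivity) hαθ]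
    refine (norm_contourTerm_le hα hθ hθπ hαθ hγ0 hγ1 hκ hl
      (abs_le.2 ⟨hψ.1.le, hψ.2⟩)).trans ?_
    gcongr _ * (_ * exp ?_)
    calc s * κ * cos ψ ≤ s * κ := mul_le_of_le_one_right (by positivity) (cos_le_one ψ)
      _ ≤ T * κ := by gcongr
  have h := norm_integral_le_of_norm_le_const hpt
  rwa [show |θ - -θ| = 2 * θ by rw [abs_of_pos (by linarith)]; ring] at h

end Contour

lemma exists_norm_Fker_le {α θ γ κ : ℝ} (hα : 0 < α) (hθ : θ ∈ Set.Ioo (π / 2) π)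
    (hαθ : α * θ < π) (hγ0 : 0 < γ) (hγ1 : γ ≤ 1) (hκ : 0 < κ) (T : ℝ) :
    ∃ A B : ℝ, ∀ s ∈ Set.Ioc 0 T, ∀ lmb > 0,
      ‖Fker α θ κ s lmb‖ ≤ lmb ^ (-γ) * (A * s ^ (-(α * γ)) + B) := by
  obtain ⟨hθ1, hθ2⟩ := hθ
  have hθ0 : 0 < θ := by linarith [pi_pos]
  have hμ : 0 < -cos θ := neg_pos.2 (cos_neg_of_pi_div_two_lt_of_lt hθ1 (by linarith))
  set m := (1 - |cos (α * θ)|)⁻¹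
  refine ⟨π⁻¹ * m * (-cos θ) ^ (-(α * γ)) * Gamma (α * γ),
    π⁻¹ * m * θ * κ ^ (α * γ) * exp (T * κ), fun s ⟨hs, hsT⟩ lmb hl => ?_⟩
  have hray := norm_integral_ray_le hα ⟨hθ1, hθ2⟩ hαθ hγ0 hγ1 hκ.le hs hl
  have harc := norm_integral_arc_le hα hθ0 hθ2 hαθ hγ0.le hγ1 hκ hs.le hsT hl
  have hscale : (1 / (s * -cos θ)) ^ (α * γ) = (-cos θ) ^ (-(α * γ)) * s ^ (-(α * γ)) := by
    rw [one_div, inv_rpow (by positivity), ← rpow_neg (by positivity), mul_rpow hs.le hμ.le,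
      mul_comm]
  have hκpow : κ * κ ^ (α * γ - 1) = κ ^ (α * γ) := by
    rw [← rpow_one_add' hκ.le (by linarith [mul_pos hα hγ0])]; ring_nf
  have hnorm : ‖1 / (2 * (π : ℂ) * Complex.I)‖ = (2 * π)⁻¹ := by
    simp [pi_pos.le]
  rw [Fker_eq_contourTerm, norm_mul, hnorm]
  calc (2 * π)⁻¹ * ‖(∫ r in Set.Ioi κ, contourTerm α s lmb r θ - contourTerm α s lmb r (-θ))
        + Complex.I * κ * ∫ ψ in (-θ)..θ, contourTerm α s lmb κ ψ‖
      ≤ (2 * π)⁻¹ * (‖∫ r in Set.Ioi κ, contourTerm α s lmb r θ - contourTerm α s lmb r (-θ)‖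
          + κ * ‖∫ ψ in (-θ)..θ, contourTerm α s lmb κ ψ‖) := by
        gcongr
        refine (norm_add_le _ _).trans_eq ?_
        rw [norm_mul, norm_mul, Complex.norm_I, Complex.norm_of_nonneg hκ.le, one_mul]
    _ ≤ (2 * π)⁻¹ * (2 * m * lmb ^ (-γ) * ((1 / (s * -cos θ)) ^ (α * γ) * Gamma (α * γ))
          + κ * (m * lmb ^ (-γ) * (κ ^ (α * γ - 1) * exp (T * κ)) * (2 * θ))) := by
        gcongr
    _ = _ := by
        rw [hscale, ← hκpow]
        field_simp

lemma summable_integral_sq_of_norm_le {E : Type*} [NormedAddCommGroup E] {F : ℕ → ℝ → E}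
    {u : ℕ → ℝ} {T p A B : ℝ} (hT : 0 ≤ T) (hp : p < 1 / 2) (hu : Summable fun j => u j ^ 2)
    (hF : ∀ j, ∀ s ∈ Set.Ioc 0 T, ‖F j s‖ ≤ u j * (A * s ^ (-p) + B)) :
    Summable fun j => ∫ s in (0 : ℝ)..T, ‖F j s‖ ^ 2 := by
  set g : ℝ → ℝ := fun s => 2 * A ^ 2 * s ^ (-(2 * p)) + 2 * B ^ 2
  have hg : IntervalIntegrable g volume 0 T :=
    ((intervalIntegrable_rpow' (by linarith)).const_mul _).add intervalIntegrable_const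
  refine (hu.mul_right (∫ s in (0 : ℝ)..T, g s)).of_nonneg_of_le
    (fun j => intervalIntegral.integral_nonneg hT fun s _ => by positivity) fun j => ?_
  rw [← intervalIntegral.integral_const_mul, intervalIntegral.integral_of_le hT,
    intervalIntegral.integral_of_le hT]
  refine integral_mono_of_nonneg (ae_of_all _ fun s => by positivity) (hg.1.const_mul _) ?_
  filter_upwards [ae_restrict_mem measurableSet_Ioc] with s hs
  have hsq : (s ^ (-p)) ^ 2 = s ^ (-(2 * p)) := by
    rw [← rpow_natCast, ← rpow_mul hs.1.le]; ring_nf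
  calc ‖F j s‖ ^ 2 ≤ (u j * (A * s ^ (-p) + B)) ^ 2 :=
        pow_le_pow_left₀ (norm_nonneg _) (hF j s hs) 2
    _ ≤ u j ^ 2 * g s := by
        rw [mul_pow]
        gcongr
        show _ ≤ 2 * A ^ 2 * s ^ (-(2 * p)) + 2 * B ^ 2
        rw [← hsq]
        nlinarith [sq_nonneg (A * s ^ (-p) - B)]

lemma summable_rpow_neg_of_le {lam : ℕ → ℝ} {c a q : ℝ} (hc : 0 < c) (hq : 0 ≤ q)
    (haq : 1 < a * q) (hlow : ∀ j : ℕ, c * ((j : ℝ) + 1) ^ a ≤ lam j) :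
    Summable fun j => lam j ^ (-q) := by
  have hsum : Summable fun j : ℕ => ((j : ℝ) + 1) ^ (-(a * q)) := by
    simpa using (summable_nat_add_iff 1).2 (summable_nat_rpow.2 (by linarith : -(a * q) < -1))
  refine (hsum.mul_left (c ^ (-q))).of_nonneg_of_le
    (fun j => rpow_nonneg ((by positivity : 0 ≤ c * _).trans (hlow j)) _) fun j => ?_
  calc lam j ^ (-q) ≤ (c * ((j : ℝ) + 1) ^ a) ^ (-q) :=
        rpow_le_rpow_of_nonpos (by positivity) (hlow j) (by linarith)
    _ = c ^ (-q) * ((j : ℝ) + 1) ^ (-(a * q)) := by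
        rw [mul_rpow hc.le (by positivity), ← rpow_mul (by positivity), mul_neg]

theorem stmt14_general (d : ℕ) (hd : d = 1 ∨ d = 2 ∨ d = 3) (α θ c κ : ℝ)
    (hα0 : 0 < α) (hαd : α < 2 / (d : ℝ)) (hc : 0 < c) (hκ : 0 < κ)
    (hθ : θ ∈ Set.Ioo (π / 2) π) (hαθ : α * θ < π)
    (lam : ℕ → ℝ)
    (hlow : ∀ j : ℕ, c * ((j : ℝ) + 1) ^ ((2 : ℝ) / (d : ℝ)) ≤ lam j) :
    ∀ T : ℝ, 0 < T →
      Summable (fun j : ℕ =>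
        ∫ s in (0 : ℝ)..T, ‖Fker α θ κ s (lam j)‖ ^ 2) := by
  intro T hT
  have hd1 : (1 : ℝ) ≤ d ∧ (d : ℝ) ≤ 3 := by rcases hd with rfl | rfl | rfl <;> norm_num
  have hd0 : (0 : ℝ) < d := by linarith
  obtain ⟨γ, hγd, hγ⟩ : ∃ γ, (d : ℝ) / 4 < γ ∧ γ < min 1 (1 / (2 * α)) := by
    refine exists_between (lt_min (by linarith) ?_)
    rw [lt_div_iff₀ (by positivity)]
    linarith [(lt_div_iff₀ hd0).1 hαd]
  have hγ0 : 0 < γ := by linarith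
  have hαγ : α * γ < 1 / 2 := by
    have := (lt_div_iff₀' (by positivity)).1 (hγ.trans_le (min_le_right _ _))
    linarith
  have hlam_pos : ∀ j, 0 < lam j := fun j => (by positivity : 0 < c * _).trans_le (hlow j)
  obtain ⟨A, B, hF⟩ := exists_norm_Fker_le hα0 hθ hαθ hγ0 (hγ.trans_le (min_le_left _ _)).le hκ T
  have hsum : Summable fun j => (lam j ^ (-γ)) ^ 2 := by
    refine (summable_rpow_neg_of_le (q := 2 * γ) hc (by positivity) ?_ hlow).congr fun j => ?_
    · rw [div_mul_eq_mul_div, one_lt_div hd0]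
      linarith
    · rw [← rpow_natCast, ← rpow_mul (hlam_pos j).le]
      ring_nf
  exact summable_integral_sq_of_norm_le hT.le hαγ hsum fun j s hs => hF s hs (lam j) (hlam_pos j)

/-- Let `d ∈ {1,2,3}`, `α ∈ (0, 2/d)`, `c > 0`, `κ > 0`,
`θ ∈ (π/2, π)` with `αθ < π`, and let `(λ_j)_{j≥1}` (here `lam j = λ_{j+1}`) be
positive reals with `λ_j ≥ c j^{2/d}`. Then for every `T > 0`,
`∑_{j≥1} ∫₀^T |F(s, λ_j)|² ds < ∞`. -/
theorem stmt14 (d : ℕ) (hd : d = 1 ∨ d = 2 ∨ d = 3) (α θ c κ : ℝ)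
    (hα0 : 0 < α) (hαd : α < 2 / (d : ℝ)) (hc : 0 < c) (hκ : 0 < κ)
    (hθ : θ ∈ Set.Ioo (π / 2) π) (hαθ : α * θ < π)
    (lam : ℕ → ℝ) (hpos : ∀ j, 0 < lam j)
    (hlow : ∀ j : ℕ, c * ((j : ℝ) + 1) ^ ((2 : ℝ) / (d : ℝ)) ≤ lam j) :
    ∀ T : ℝ, 0 < T →
      Summable (fun j : ℕ =>
        ∫ s in (0 : ℝ)..T, ‖Fker α θ κ s (lam j)‖ ^ 2) :=
  stmt14_general d hd α θ c κ hα0 hαd hc hκ hθ hαθ lam hlow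
end
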